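/- arXiv:2604.09970 — 4 statements merged into one kernel-verified Lean document; each statement's English description precedes it below -/
import Mathlib

section
/- Let ρ̂ = 1 − ρ and let 0 < γ ≤ (1−ρ)(1−η²)/100. Then the sequences generated by Algorithm LoDAdaC satisfy, for every r ∈ {0,…,T−1}: E[‖X_⊥^{(r+1)K}‖²] ≤ (1 + γρ̂/16)·(1 − γρ̂/2)²·E[‖X_⊥^{rK}‖²] + 4(1 + γρ̂/16)·γ·(1 + 2/ρ̂)·E[‖X^{rK} − X̲^{(r+1)K}‖²] + 2(1 + 16/(γρ̂))·α²K²nB²·δ^{−1}. -/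
open MeasureTheory Finset Real
open scoped RealInnerProductSpace

noncomputable section

/-- Frobenius norm squared of a `d × n` real matrix. -/
def frobSq {d n : ℕ} (A : Matrix (Fin d) (Fin n) ℝ) : ℝ := ∑ k, ∑ i, (A k i) ^ 2

/-- Frobenius norm of a `d × n` real matrix. -/
def frob {d n : ℕ} (A : Matrix (Fin d) (Fin n) ℝ) : ℝ := Real.sqrt (frobSq A)

/-- The averaging matrix `J = 𝟙𝟙ᵀ/n`. -/
def Jmat (n : ℕ) : Matrix (Fin n) (Fin n) ℝ := Matrix.of fun _ _ => (n : ℝ)⁻¹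

/-- The `i`-th column of a matrix, as a vector in Euclidean space. -/
def col {d n : ℕ} (A : Matrix (Fin d) (Fin n) ℝ) (i : Fin n) : EuclideanSpace ℝ (Fin d) :=
  WithLp.toLp 2 (fun k => A k i)

/-- The average of the columns of a matrix. -/
def avg {d n : ℕ} (A : Matrix (Fin d) (Fin n) ℝ) : EuclideanSpace ℝ (Fin d) :=
  WithLp.toLp 2 (fun k => (∑ i, A k i) / n)

/-- Componentwise `1/√(u + δ)`. -/
def invSq {d : ℕ} (u : EuclideanSpace ℝ (Fin d)) (δ : ℝ) : EuclideanSpace ℝ (Fin d) :=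
  WithLp.toLp 2 (fun k => (Real.sqrt (u k + δ))⁻¹)

/-- Componentwise (Hadamard) product of vectors. -/
def odot {d : ℕ} (a b : EuclideanSpace ℝ (Fin d)) : EuclideanSpace ℝ (Fin d) :=
  WithLp.toLp 2 (fun k => a k * b k)

/-- Componentwise `a/√(u + δ)`. -/
def adiv {d : ℕ} (a u : EuclideanSpace ℝ (Fin d)) (δ : ℝ) : EuclideanSpace ℝ (Fin d) :=
  WithLp.toLp 2 (fun k => a k / Real.sqrt (u k + δ))

/-- Spectral norm of a square real matrix. -/
def specNorm {n : ℕ} (A : Matrix (Fin n) (Fin n) ℝ) : ℝ :=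
  ‖LinearMap.toContinuousLinearMap (Matrix.toEuclideanLin A)‖

section helpers

variable {d n : ℕ}

lemma frobSq_nonneg (A : Matrix (Fin d) (Fin n) ℝ) : 0 ≤ frobSq A :=
  Finset.sum_nonneg fun _ _ => Finset.sum_nonneg fun _ _ => sq_nonneg _

lemma frob_nonneg (A : Matrix (Fin d) (Fin n) ℝ) : 0 ≤ frob A := Real.sqrt_nonneg _

lemma frob_sq (A : Matrix (Fin d) (Fin n) ℝ) : frob A ^ 2 = frobSq A :=
  Real.sq_sqrt (frobSq_nonneg A)

lemma frob_le_of_sq_le {A : Matrix (Fin d) (Fin n) ℝ} {c : ℝ} (hc : 0 ≤ c)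
    (h : frobSq A ≤ c ^ 2) : frob A ≤ c := by
  calc frob A = Real.sqrt (frobSq A) := rfl
  _ ≤ Real.sqrt (c ^ 2) := Real.sqrt_le_sqrt h
  _ = c := Real.sqrt_sq hc

lemma frob_eq_norm (A : Matrix (Fin d) (Fin n) ℝ) :
    frob A = ‖(WithLp.equiv 2 (Fin d × Fin n → ℝ)).symm (fun p => A p.1 p.2)‖ := by
  rw [EuclideanSpace.norm_eq, frob, frobSq]
  congr 1
  rw [Fintype.sum_prod_type]
  simp [sq_abs]

lemma frob_add_le (A B : Matrix (Fin d) (Fin n) ℝ) : frob (A + B) ≤ frob A + frob B := by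
  rw [frob_eq_norm, frob_eq_norm, frob_eq_norm]
  have h : ((WithLp.equiv 2 (Fin d × Fin n → ℝ)).symm (fun p => (A + B) p.1 p.2))
      = (WithLp.equiv 2 (Fin d × Fin n → ℝ)).symm (fun p => A p.1 p.2)
        + (WithLp.equiv 2 (Fin d × Fin n → ℝ)).symm (fun p => B p.1 p.2) := rfl
  rw [h]
  exact norm_add_le _ _

lemma frobSq_smul (c : ℝ) (A : Matrix (Fin d) (Fin n) ℝ) : frobSq (c • A) = c ^ 2 * frobSq A := by
  simp [frobSq, Finset.mul_sum, mul_pow]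

lemma frob_smul (c : ℝ) (A : Matrix (Fin d) (Fin n) ℝ) : frob (c • A) = |c| * frob A := by
  rw [frob, frobSq_smul, frob, Real.sqrt_mul (sq_nonneg c), Real.sqrt_sq_eq_abs]

lemma frob_zero : frob (0 : Matrix (Fin d) (Fin n) ℝ) = 0 := by
  simp [frob, frobSq]

lemma frob_sub_le (A B : Matrix (Fin d) (Fin n) ℝ) : frob (A - B) ≤ frob A + frob B := by
  rw [sub_eq_add_neg]
  refine le_trans (frob_add_le _ _) ?_
  rw [show -B = (-1 : ℝ) • B by simp, frob_smul]
  simp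

lemma frob_sum_le {ι : Type*} (s : Finset ι) (F : ι → Matrix (Fin d) (Fin n) ℝ) :
    frob (∑ j ∈ s, F j) ≤ ∑ j ∈ s, frob (F j) := by
  classical
  induction s using Finset.induction with
  | empty => simp [frob_zero]
  | insert _ _ hx ih =>
    rw [Finset.sum_insert hx, Finset.sum_insert hx]
    exact le_trans (frob_add_le _ _) (by linarith)

lemma specNorm_nonneg (A : Matrix (Fin n) (Fin n) ℝ) : 0 ≤ specNorm A := norm_nonneg _

lemma mulVec_sq_le (A : Matrix (Fin n) (Fin n) ℝ) (v : Fin n → ℝ) :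
    ∑ i, (A.mulVec v i) ^ 2 ≤ specNorm A ^ 2 * ∑ j, (v j) ^ 2 := by
  have h := ContinuousLinearMap.le_opNorm
    (LinearMap.toContinuousLinearMap (Matrix.toEuclideanLin A))
    ((WithLp.equiv 2 (Fin n → ℝ)).symm v)
  have e1 : (LinearMap.toContinuousLinearMap (Matrix.toEuclideanLin A))
      ((WithLp.equiv 2 (Fin n → ℝ)).symm v)
      = (WithLp.equiv 2 (Fin n → ℝ)).symm (A.mulVec v) := by
    simp
  rw [e1] at h
  have n1 : ‖(WithLp.equiv 2 (Fin n → ℝ)).symm (A.mulVec v)‖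
      = Real.sqrt (∑ i, (A.mulVec v i) ^ 2) := by
    rw [EuclideanSpace.norm_eq]; simp [sq_abs]
  have n2 : ‖(WithLp.equiv 2 (Fin n → ℝ)).symm v‖ = Real.sqrt (∑ j, (v j) ^ 2) := by
    rw [EuclideanSpace.norm_eq]; simp [sq_abs]
  rw [n1, n2] at h
  have h0 : (0:ℝ) ≤ ∑ i, (A.mulVec v i) ^ 2 := Finset.sum_nonneg fun _ _ => sq_nonneg _
  have h0' : (0:ℝ) ≤ ∑ j, (v j) ^ 2 := Finset.sum_nonneg fun _ _ => sq_nonneg _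
  calc ∑ i, (A.mulVec v i) ^ 2 = Real.sqrt (∑ i, (A.mulVec v i) ^ 2) ^ 2 :=
        (Real.sq_sqrt h0).symm
    _ ≤ (specNorm A * Real.sqrt (∑ j, (v j) ^ 2)) ^ 2 := by
        apply pow_le_pow_left₀ (Real.sqrt_nonneg _) h
    _ = specNorm A ^ 2 * ∑ j, (v j) ^ 2 := by
        rw [mul_pow, Real.sq_sqrt h0']

lemma vecMul_sq_le (A : Matrix (Fin n) (Fin n) ℝ) (z : Fin n → ℝ) :
    ∑ i, (∑ j, z j * A j i) ^ 2 ≤ specNorm A ^ 2 * ∑ j, (z j) ^ 2 := by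
  set w : Fin n → ℝ := fun i => ∑ j, z j * A j i with hw
  have ht0 : (0:ℝ) ≤ ∑ i, (w i) ^ 2 := Finset.sum_nonneg fun _ _ => sq_nonneg _
  have key : ∑ i, (w i) ^ 2 = ∑ j, z j * (A.mulVec w j) := by
    have : ∀ i, (w i) ^ 2 = ∑ j, z j * A j i * w i := by
      intro i; rw [pow_two, hw]; exact Finset.sum_mul _ _ _
    rw [Finset.sum_congr rfl fun i _ => this i, Finset.sum_comm]
    refine Finset.sum_congr rfl fun j _ => ?_
    simp [Matrix.mulVec, dotProduct, Finset.mul_sum, mul_assoc]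
  have cs : (∑ j, z j * (A.mulVec w j)) ^ 2
      ≤ (∑ j, (z j) ^ 2) * ∑ j, (A.mulVec w j) ^ 2 :=
    Finset.sum_mul_sq_le_sq_mul_sq _ _ _
  have hb : ∑ j, (A.mulVec w j) ^ 2 ≤ specNorm A ^ 2 * ∑ i, (w i) ^ 2 := mulVec_sq_le A w
  have hz0 : (0:ℝ) ≤ ∑ j, (z j) ^ 2 := Finset.sum_nonneg fun _ _ => sq_nonneg _
  rcases eq_or_lt_of_le ht0 with h0 | h0
  · rw [← h0]; positivity
  · have main : (∑ i, (w i) ^ 2) ^ 2 ≤ (specNorm A ^ 2 * ∑ j, (z j) ^ 2) * ∑ i, (w i) ^ 2 := by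
      calc (∑ i, (w i) ^ 2) ^ 2 = (∑ j, z j * (A.mulVec w j)) ^ 2 := by rw [key]
        _ ≤ (∑ j, (z j) ^ 2) * ∑ j, (A.mulVec w j) ^ 2 := cs
        _ ≤ (∑ j, (z j) ^ 2) * (specNorm A ^ 2 * ∑ i, (w i) ^ 2) :=
            mul_le_mul_of_nonneg_left hb hz0
        _ = (specNorm A ^ 2 * ∑ j, (z j) ^ 2) * ∑ i, (w i) ^ 2 := by ring
    nlinarith [main, h0]

lemma proj_vec_bound (hn : 0 < n) (z : Fin n → ℝ) :
    ∑ i, (∑ j, z j * (1 - Jmat n) j i) ^ 2 ≤ 1 ^ 2 * ∑ j, (z j) ^ 2 := by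
  have hne : (n:ℝ) ≠ 0 := Nat.cast_ne_zero.mpr hn.ne'
  set s : ℝ := ∑ j, z j with hs
  set m : ℝ := s / n with hm
  have hin : ∀ i, ∑ j, z j * ((1 - Jmat n) j i) = z i - m := by
    intro i
    have : ∀ j, z j * ((1 - Jmat n) j i)
        = (if j = i then z j else 0) - z j * (n:ℝ)⁻¹ := by
      intro j
      by_cases h : j = i <;> simp [Matrix.sub_apply, Matrix.one_apply, Jmat, h, mul_sub]
    rw [Finset.sum_congr rfl fun j _ => this j, Finset.sum_sub_distrib,
      Finset.sum_ite_eq' univ i z, ← Finset.sum_mul]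
    simp [hm, hs, div_eq_mul_inv]
  have expand : ∑ i, (z i - m) ^ 2 = (∑ i, (z i) ^ 2) - 2 * m * s + n * m ^ 2 := by
    simp_rw [sub_sq]
    rw [Finset.sum_add_distrib, Finset.sum_sub_distrib, Finset.sum_const]
    have e1 : ∑ i, 2 * z i * m = 2 * m * s := by
      rw [hs, Finset.mul_sum (a := 2 * m)]
      refine Finset.sum_congr rfl fun i _ => by ring
    rw [e1]
    simp [Finset.card_univ, nsmul_eq_mul]
  have hnm : (n:ℝ) * m ^ 2 = s ^ 2 / n := by
    rw [hm]; field_simp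
  have h2ms : 2 * m * s = 2 * (s ^ 2 / n) := by rw [hm]; ring
  rw [Finset.sum_congr rfl fun i _ => by rw [hin i], expand, one_pow, one_mul]
  have : (0:ℝ) ≤ s ^ 2 / n := by positivity
  nlinarith [this, hnm, h2ms]

lemma stoch_vec_bound (W : Matrix (Fin n) (Fin n) ℝ) (hWpos : ∀ i j, 0 ≤ W i j)
    (hWrow : ∀ i, ∑ j, W i j = 1) (hWcol : ∀ j, ∑ i, W i j = 1) (z : Fin n → ℝ) :
    ∑ i, (∑ j, z j * W j i) ^ 2 ≤ 1 ^ 2 * ∑ j, (z j) ^ 2 := by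
  have step : ∀ i, (∑ j, z j * W j i) ^ 2 ≤ ∑ j, W j i * (z j) ^ 2 := by
    intro i
    have cs := Finset.sum_sq_le_sum_mul_sum_of_sq_eq_mul (univ : Finset (Fin n))
      (r := fun j => z j * W j i) (f := fun j => W j i) (g := fun j => W j i * (z j) ^ 2)
      (fun j _ => hWpos j i) (fun j _ => mul_nonneg (hWpos j i) (sq_nonneg _))
      (fun j _ => by ring)
    rw [hWcol i, one_mul] at cs
    exact cs
  calc ∑ i, (∑ j, z j * W j i) ^ 2 ≤ ∑ i, ∑ j, W j i * (z j) ^ 2 :=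
        Finset.sum_le_sum fun i _ => step i
    _ = ∑ j, ∑ i, W j i * (z j) ^ 2 := Finset.sum_comm
    _ = ∑ j, (z j) ^ 2 := by
        refine Finset.sum_congr rfl fun j _ => ?_
        rw [← Finset.sum_mul, hWrow j, one_mul]
    _ = 1 ^ 2 * ∑ j, (z j) ^ 2 := by ring

lemma young_ineq {x y ε : ℝ} (hε : 0 < ε) :
    (x + y) ^ 2 ≤ (1 + ε) * x ^ 2 + (1 + ε⁻¹) * y ^ 2 := by
  have key : ε * ((1 + ε) * x ^ 2 + (1 + ε⁻¹) * y ^ 2 - (x + y) ^ 2) = (ε * x - y) ^ 2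
      + (ε - 1) * 0 := by
    field_simp
    ring
  nlinarith [sq_nonneg (ε * x - y), key, hε]

lemma frobSq_add_le (A B : Matrix (Fin d) (Fin n) ℝ) {ε : ℝ} (hε : 0 < ε) :
    frobSq (A + B) ≤ (1 + ε) * frobSq A + (1 + ε⁻¹) * frobSq B := by
  rw [← frob_sq, ← frob_sq, ← frob_sq]
  calc frob (A + B) ^ 2 ≤ (frob A + frob B) ^ 2 :=
        pow_le_pow_left₀ (frob_nonneg _) (frob_add_le A B) 2
    _ ≤ _ := young_ineq hε

lemma frobSq_sub_le (A B : Matrix (Fin d) (Fin n) ℝ) :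
    frobSq (A - B) ≤ 2 * frobSq A + 2 * frobSq B := by
  unfold frobSq
  rw [Finset.mul_sum, Finset.mul_sum, ← Finset.sum_add_distrib]
  refine Finset.sum_le_sum fun k _ => ?_
  rw [Finset.mul_sum, Finset.mul_sum, ← Finset.sum_add_distrib]
  refine Finset.sum_le_sum fun i _ => ?_
  simp only [Matrix.sub_apply]
  nlinarith [sq_nonneg (A k i + B k i)]

lemma frobSq_mul_le (A : Matrix (Fin d) (Fin n) ℝ) (Bm : Matrix (Fin n) (Fin n) ℝ) {c : ℝ}
    (h : ∀ z : Fin n → ℝ, ∑ i, (∑ j, z j * Bm j i) ^ 2 ≤ c ^ 2 * ∑ j, (z j) ^ 2) :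
    frobSq (A * Bm) ≤ c ^ 2 * frobSq A := by
  calc frobSq (A * Bm) = ∑ k, ∑ i, (∑ j, A k j * Bm j i) ^ 2 := by
        simp [frobSq, Matrix.mul_apply]
    _ ≤ ∑ k, c ^ 2 * ∑ j, (A k j) ^ 2 := Finset.sum_le_sum fun k _ => h (A k)
    _ = c ^ 2 * frobSq A := by rw [frobSq, Finset.mul_sum]

lemma Jmul_W (W : Matrix (Fin n) (Fin n) ℝ) (hWcol : ∀ j, ∑ i, W i j = 1) :
    Jmat n * W = Jmat n := by
  ext i j
  simp [Matrix.mul_apply, Jmat, ← Finset.mul_sum, hWcol j]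

lemma Wmul_J (W : Matrix (Fin n) (Fin n) ℝ) (hWrow : ∀ i, ∑ j, W i j = 1) :
    W * Jmat n = Jmat n := by
  ext i j
  simp [Matrix.mul_apply, Jmat, ← Finset.sum_mul, hWrow i]

lemma Jmul_J (hn : 0 < n) : Jmat n * Jmat n = Jmat n := by
  have hne : (n:ℝ) ≠ 0 := Nat.cast_ne_zero.mpr hn.ne'
  ext i j
  simp [Matrix.mul_apply, Jmat, Finset.sum_const, Finset.card_univ, nsmul_eq_mul]
  field_simp

lemma keyid (X₀ Xu S : Matrix (Fin d) (Fin n) ℝ) (W : Matrix (Fin n) (Fin n) ℝ)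
    (hn : 0 < n) (hWrow : ∀ i, ∑ j, W i j = 1) (hWcol : ∀ j, ∑ i, W i j = 1)
    (γ : ℝ) :
    ((X₀ - S) + γ • (Xu * (W - 1))) * (1 - Jmat n)
      = (((1 - γ) • (X₀ * (1 - Jmat n)) + γ • ((X₀ * (1 - Jmat n)) * (W - Jmat n)))
          + (-γ) • ((X₀ - Xu) * (W - 1)))
        + (-(1:ℝ)) • (S * (1 - Jmat n)) := by
  have hJW := Jmul_W W hWcol
  have hWJ := Wmul_J W hWrow
  have hJJ := Jmul_J (n := n) hn
  have h1 : (W - 1) * (1 - Jmat n) = W - 1 := by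
    simp only [sub_mul, mul_sub, hWJ, mul_one, one_mul]
    abel
  have h2 : (1 - Jmat n) * (W - Jmat n) = W - Jmat n := by
    simp only [sub_mul, mul_sub, hJW, hJJ, mul_one, one_mul]
    abel
  have h3 : (X₀ * (1 - Jmat n)) * (W - Jmat n) = X₀ * (W - Jmat n) := by
    rw [Matrix.mul_assoc, h2]
  have h4 : X₀ * (W - Jmat n) = X₀ * (1 - Jmat n) + X₀ * (W - 1) := by
    rw [← Matrix.mul_add]
    congr 1
    abel
  have h5 : (γ • (Xu * (W - 1))) * (1 - Jmat n) = γ • (Xu * (W - 1)) := by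
    rw [Matrix.smul_mul, Matrix.mul_assoc, h1]
  have h6 : (X₀ - Xu) * (W - 1) = X₀ * (W - 1) - Xu * (W - 1) := Matrix.sub_mul _ _ _
  rw [Matrix.add_mul, Matrix.sub_mul, h5, h3, h4, h6]
  module

lemma final_scalar {ρ γ : ℝ} (z dd c : ℝ) (hρ0 : 0 ≤ ρ) (hρ1 : ρ < 1) (hγ0 : 0 < γ)
    (hγ1 : γ ≤ 1 / 100) (ha1 : γ * (1 - ρ) ≤ 1 / 100) (hc : 0 ≤ c) :
    (1 + γ * (1 - ρ) / 16) * ((1 + γ * (1 - ρ)) * ((1 - γ * (1 - ρ)) * z) ^ 2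
        + (1 + (γ * (1 - ρ))⁻¹) * (2 * γ * dd) ^ 2)
      + (1 + (γ * (1 - ρ) / 16)⁻¹) * c
    ≤ (1 + γ * (1 - ρ) / 16) * (1 - γ * (1 - ρ) / 2) ^ 2 * z ^ 2
      + 4 * (1 + γ * (1 - ρ) / 16) * γ * (1 + 2 / (1 - ρ)) * dd ^ 2
      + 2 * (1 + 16 / (γ * (1 - ρ))) * c := by
  have hrho : 0 < 1 - ρ := by linarith
  have ha0 : 0 < γ * (1 - ρ) := mul_pos hγ0 hrho
  have part1 : (1 + γ * (1 - ρ) / 16) * ((1 + γ * (1 - ρ)) * ((1 - γ * (1 - ρ)) * z) ^ 2)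
      ≤ (1 + γ * (1 - ρ) / 16) * (1 - γ * (1 - ρ) / 2) ^ 2 * z ^ 2 := by
    have k1 : (1 + γ * (1 - ρ)) * (1 - γ * (1 - ρ)) ^ 2 ≤ (1 - γ * (1 - ρ) / 2) ^ 2 := by
      nlinarith [ha0, ha1, mul_pos ha0 ha0]
    calc (1 + γ * (1 - ρ) / 16) * ((1 + γ * (1 - ρ)) * ((1 - γ * (1 - ρ)) * z) ^ 2)
        = ((1 + γ * (1 - ρ)) * (1 - γ * (1 - ρ)) ^ 2) * ((1 + γ * (1 - ρ) / 16) * z ^ 2) := by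
          ring
      _ ≤ (1 - γ * (1 - ρ) / 2) ^ 2 * ((1 + γ * (1 - ρ) / 16) * z ^ 2) :=
          mul_le_mul_of_nonneg_right k1 (mul_nonneg (by linarith) (sq_nonneg z))
      _ = (1 + γ * (1 - ρ) / 16) * (1 - γ * (1 - ρ) / 2) ^ 2 * z ^ 2 := by ring
  have part2 : (1 + γ * (1 - ρ) / 16) * ((1 + (γ * (1 - ρ))⁻¹) * (2 * γ * dd) ^ 2)
      ≤ 4 * (1 + γ * (1 - ρ) / 16) * γ * (1 + 2 / (1 - ρ)) * dd ^ 2 := by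
    have k2 : (1 + (γ * (1 - ρ))⁻¹) * (4 * γ ^ 2) ≤ 4 * γ * (1 + 2 / (1 - ρ)) := by
      have e : (1 + (γ * (1 - ρ))⁻¹) * (4 * γ ^ 2) = 4 * γ ^ 2 + 4 * γ / (1 - ρ) := by
        field_simp
      have e2 : 4 * γ * (1 + 2 / (1 - ρ)) = 4 * γ + 8 * γ / (1 - ρ) := by
        field_simp
        ring
      rw [e, e2]
      have k3 : γ ^ 2 ≤ γ := by nlinarith
      have k4 : 4 * γ / (1 - ρ) ≤ 8 * γ / (1 - ρ) := by
        gcongr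
        linarith
      linarith
    calc (1 + γ * (1 - ρ) / 16) * ((1 + (γ * (1 - ρ))⁻¹) * (2 * γ * dd) ^ 2)
        = ((1 + (γ * (1 - ρ))⁻¹) * (4 * γ ^ 2)) * ((1 + γ * (1 - ρ) / 16) * dd ^ 2) := by
          ring
      _ ≤ (4 * γ * (1 + 2 / (1 - ρ))) * ((1 + γ * (1 - ρ) / 16) * dd ^ 2) :=
          mul_le_mul_of_nonneg_right k2 (mul_nonneg (by linarith) (sq_nonneg dd))
      _ = 4 * (1 + γ * (1 - ρ) / 16) * γ * (1 + 2 / (1 - ρ)) * dd ^ 2 := by ring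
  have part3 : (1 + (γ * (1 - ρ) / 16)⁻¹) * c ≤ 2 * (1 + 16 / (γ * (1 - ρ))) * c := by
    have e : (γ * (1 - ρ) / 16)⁻¹ = 16 / (γ * (1 - ρ)) := by
      rw [inv_div]
    rw [e]
    have h16 : (0:ℝ) ≤ 16 / (γ * (1 - ρ)) := div_nonneg (by norm_num) ha0.le
    nlinarith [mul_nonneg (by linarith : (0:ℝ) ≤ 1 + 16 / (γ * (1 - ρ))) hc]
  linarith [part1, part2, part3]

end helpers
set_option maxHeartbeats 2000000 in
/-- Lemma A.2(i). With `ρ̂ = 1 − ρ` and `0 < γ ≤ (1−ρ)(1−η²)/100`, for every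
`r ∈ {0,…,T−1}`:
`E‖X⊥^{(r+1)K}‖² ≤ (1+γρ̂/16)(1−γρ̂/2)² E‖X⊥^{rK}‖²
  + 4(1+γρ̂/16)γ(1+2/ρ̂) E‖X^{rK} − X̲^{(r+1)K}‖² + 2(1+16/(γρ̂)) α²K²nB²/δ`. -/
theorem stmt1 (d n T K : ℕ) (hn : 0 < n) (hT : 0 < T) (hK : 0 < K)
    -- the underlying probability space
    (Ω : Type) [MeasurableSpace Ω] [StandardBorelSpace Ω]
    (μ : Measure Ω) [IsProbabilityMeasure μ]
    -- the filtration of the algorithm: `ℱ t` is the information up to the `t`-th iterate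
    (ℱ : ℕ → MeasurableSpace Ω) (hℱ : ∀ t, ℱ t ≤ ‹MeasurableSpace Ω›)
    -- local objectives and parameters
    (f : Fin n → EuclideanSpace ℝ (Fin d) → ℝ)
    (L B Binf ρ η α β₁ δ γ : ℝ)
    (W : Matrix (Fin n) (Fin n) ℝ)
    (x0 : EuclideanSpace ℝ (Fin d))
    -- iterate sequences of Algorithm LoDAdaC (random)
    (X Xu G : ℕ → Ω → Matrix (Fin d) (Fin n) ℝ)
    (M U : ℤ → Ω → Matrix (Fin d) (Fin n) ℝ)
    (Y : ℕ → Ω → Matrix (Fin d) (Fin n) ℝ)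
    -- Assumption 1 (problem setup): each `fᵢ` is `L`-smooth and `f` is bounded below
    (hdiff : ∀ (i : Fin n) (x : EuclideanSpace ℝ (Fin d)), DifferentiableAt ℝ (f i) x)
    (hLsmooth : ∀ (i : Fin n) (x y : EuclideanSpace ℝ (Fin d)),
      ‖gradient (f i) x - gradient (f i) y‖ ≤ L * ‖x - y‖)
    (hlow : BddBelow (Set.range fun x => (∑ i, f i x) / n))
    -- Assumption 2 (mixing matrix): `W` is doubly stochastic, `Null(W−I) = span{𝟙}` and
    -- `ρ = ‖W − J‖₂ < 1`
    (hWpos : ∀ i j, 0 ≤ W i j)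
    (hWrow : ∀ i, ∑ j, W i j = 1)
    (hWcol : ∀ j, ∑ i, W i j = 1)
    (hWnull : ∀ v : Fin n → ℝ, W.mulVec v = v → ∃ c : ℝ, v = fun _ => c)
    (hρ : ρ = specNorm (W - Jmat n)) (hρ1 : ρ < 1)
    -- algorithm parameters
    (hα : 0 < α) (hβ₁0 : 0 ≤ β₁) (hβ₁1 : β₁ < 1) (hδ : 0 < δ) (hη0 : 0 ≤ η) (hη1 : η < 1)
    -- initialization
    (hX0 : ∀ ω (k : Fin d) (i : Fin n), X 0 ω k i = x0 k)
    (hXu0 : ∀ ω (k : Fin d) (i : Fin n), Xu 0 ω k i = x0 k)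
    (hM0 : ∀ ω, M (-1) ω = 0) (hU1 : ∀ ω, U (-1) ω = 0) (hU2 : ∀ ω, U (-2) ω = 0)
    (hUpos : ∀ (t : ℤ) ω (k : Fin d) (i : Fin n), 0 ≤ U t ω k i)
    -- recursions of Algorithm LoDAdaC
    (hMrec : ∀ (t : ℕ) ω, M (t : ℤ) ω = β₁ • M ((t : ℤ) - 1) ω + (1 - β₁) • G t ω)
    (hY : ∀ (t : ℕ) ω,
      Y t ω = Matrix.of fun k i => M (t : ℤ) ω k i / Real.sqrt (U ((t : ℤ) - 1) ω k i + δ))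
    (hcomm : ∀ (t : ℕ) ω, (t + 1) % K = 0 →
      X (t + 1) ω = (X t ω - α • Y t ω) + γ • (Xu (t + 1) ω * (W - 1)))
    (hlocal : ∀ (t : ℕ) ω, (t + 1) % K ≠ 0 →
      X (t + 1) ω = X t ω - α • Y t ω ∧ Xu (t + 1) ω = Xu t ω)
    -- `Q` is an `η`-compression operator, applied columnwise at communication steps:
    -- `X̲ᵗ⁺¹ = X̲ᵗ + Q[Xᵗ⁺¹ᐟ² − X̲ᵗ]`, so `E‖xᵢᵗ⁺¹ᐟ² − x̲ᵢᵗ⁺¹‖² ≤ η² E‖xᵢᵗ⁺¹ᐟ² − x̲ᵢᵗ‖²`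
    (hQ : ∀ t : ℕ, (t + 1) % K = 0 → ∀ i : Fin n,
      ∫ ω, ‖col (X t ω - α • Y t ω - Xu (t + 1) ω) i‖ ^ 2 ∂μ
        ≤ η ^ 2 * ∫ ω, ‖col (X t ω - α • Y t ω - Xu t ω) i‖ ^ 2 ∂μ)
    -- Assumption 3 (stochastic gradients): unbiasedness, independence across agents,
    -- and boundedness
    (hGmeas : ∀ (t : ℕ) (k : Fin d) (i : Fin n), Measurable fun ω => G t ω k i)
    (hXmeas : ∀ (t : ℕ) (k : Fin d) (i : Fin n), Measurable fun ω => X t ω k i)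
    (hXumeas : ∀ (t : ℕ) (k : Fin d) (i : Fin n), Measurable fun ω => Xu t ω k i)
    (hUmeas : ∀ (t : ℤ) (k : Fin d) (i : Fin n), Measurable fun ω => U t ω k i)
    (hXadapt : ∀ (t : ℕ) (k : Fin d) (i : Fin n), Measurable[ℱ t] fun ω => X t ω k i)
    (hUadapt : ∀ (t : ℕ) (k : Fin d) (i : Fin n),
      Measurable[ℱ t] fun ω => U ((t : ℤ) - 1) ω k i)
    (hMadapt : ∀ (t : ℕ) (k : Fin d) (i : Fin n),
      Measurable[ℱ t] fun ω => M ((t : ℤ) - 1) ω k i)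
    (hunbias : ∀ (t : ℕ) (i : Fin n),
      μ[fun ω => col (G t ω) i | ℱ t] =ᵐ[μ] fun ω => gradient (f i) (col (X t ω) i))
    (hindep : ∀ t : ℕ, ProbabilityTheory.iCondIndepFun (ℱ t) (hℱ t)
      (fun i ω => col (G t ω) i) μ)
    (hGB : ∀ (t : ℕ) ω (i : Fin n), ‖col (G t ω) i‖ ≤ B)
    (hGBinf : ∀ (t : ℕ) ω (k : Fin d) (i : Fin n), |G t ω k i| ≤ Binf)
    (hgradB : ∀ (i : Fin n) (x : EuclideanSpace ℝ (Fin d)), ‖gradient (f i) x‖ ≤ B)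
    (hgradBinf : ∀ (i : Fin n) (x : EuclideanSpace ℝ (Fin d)) (k : Fin d),
      |gradient (f i) x k| ≤ Binf)
    -- square integrability of the iterates
    (hXint : ∀ t : ℕ, Integrable (fun ω => frobSq (X t ω)) μ)
    (hXuint : ∀ t : ℕ, Integrable (fun ω => frobSq (Xu t ω)) μ)
    (hγ0 : 0 < γ) (hγle : γ ≤ (1 - ρ) * (1 - η ^ 2) / 100) :
    ∀ r : ℕ, r < T →
      ∫ ω, frobSq (X ((r + 1) * K) ω * (1 - Jmat n)) ∂μ
        ≤ (1 + γ * (1 - ρ) / 16) * (1 - γ * (1 - ρ) / 2) ^ 2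
              * ∫ ω, frobSq (X (r * K) ω * (1 - Jmat n)) ∂μ
          + 4 * (1 + γ * (1 - ρ) / 16) * γ * (1 + 2 / (1 - ρ))
              * ∫ ω, frobSq (X (r * K) ω - Xu ((r + 1) * K) ω) ∂μ
          + 2 * (1 + 16 / (γ * (1 - ρ))) * α ^ 2 * K ^ 2 * n * B ^ 2 / δ := by
  intro r hr
  -- basic positivity facts
  have hρ0 : 0 ≤ ρ := by rw [hρ]; exact norm_nonneg _
  have hrho : 0 < 1 - ρ := by linarith
  have hη2 : η ^ 2 < 1 := by nlinarith
  have hprod1 : (1 - ρ) * (1 - η ^ 2) ≤ 1 := by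
    nlinarith [mul_nonneg hρ0 (by linarith : (0:ℝ) ≤ 1 - η ^ 2)]
  have hγ1 : γ ≤ 1 / 100 := by linarith
  have ha0 : 0 < γ * (1 - ρ) := mul_pos hγ0 hrho
  have ha1 : γ * (1 - ρ) ≤ 1 / 100 := by nlinarith
  have hB0 : 0 ≤ B := le_trans (norm_nonneg _) (hgradB ⟨0, hn⟩ x0)
  have hcK : (0:ℝ) ≤ (n:ℝ) * B ^ 2 / δ := div_nonneg (by positivity) hδ.le
  -- the local steps between communications
  have hstep : ∀ ω, ∀ s : ℕ, s ≤ K - 1 →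
      X (r * K + s) ω = X (r * K) ω - α • ∑ j ∈ Finset.range s, Y (r * K + j) ω := by
    intro ω s
    induction s with
    | zero => intro _; simp
    | succ m ih =>
      intro hs
      have hmod : (r * K + m + 1) % K ≠ 0 := by
        have e : r * K + m + 1 = (m + 1) + r * K := by omega
        rw [e, Nat.add_mul_mod_self_right, Nat.mod_eq_of_lt (by omega)]
        omega
      obtain ⟨h1, -⟩ := hlocal (r * K + m) ω hmod
      have e : r * K + (m + 1) = r * K + m + 1 := by omega
      rw [e, h1, ih (by omega), Finset.sum_range_succ, smul_add]
      abel
  -- the combined update over one round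
  have hXform : ∀ ω, X ((r + 1) * K) ω
      = (X (r * K) ω - α • ∑ j ∈ Finset.range K, Y (r * K + j) ω)
        + γ • (Xu ((r + 1) * K) ω * (W - 1)) := by
    intro ω
    have hrk : (r + 1) * K = r * K + K := by ring
    have e1 : (r + 1) * K = (r * K + (K - 1)) + 1 := by omega
    have hmod : ((r * K + (K - 1)) + 1) % K = 0 := by
      have e2 : (r * K + (K - 1)) + 1 = (r + 1) * K := by omega
      have e3 : r * K + K = K * (r + 1) := by ring
      rw [e2, hrk, e3, Nat.mul_mod_right]
    have h2 := hcomm (r * K + (K - 1)) ω hmod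
    have h3 := hstep ω (K - 1) le_rfl
    rw [e1, h2, h3,
      show Finset.range K = Finset.range ((K - 1) + 1) from congrArg _ (by omega),
      Finset.sum_range_succ, smul_add]
    abel
  -- uniform column bound on the momentum
  have hMcol : ∀ t : ℕ, ∀ ω (i : Fin n), ‖col (M (t : ℤ) ω) i‖ ≤ B := by
    intro t
    induction t with
    | zero =>
      intro ω i
      have h := hMrec 0 ω
      rw [show ((0:ℕ):ℤ) = (0:ℤ) from rfl, show (0:ℤ) - 1 = (-1 : ℤ) from rfl, hM0 ω] at h
      rw [show ((0:ℕ):ℤ) = (0:ℤ) from rfl, h]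
      have e : col (β₁ • (0 : Matrix (Fin d) (Fin n) ℝ) + (1 - β₁) • G 0 ω) i
          = (1 - β₁) • col (G 0 ω) i := by
        ext k
        simp [col]
      rw [e, norm_smul, Real.norm_eq_abs, abs_of_nonneg (by linarith : (0:ℝ) ≤ 1 - β₁)]
      have h1 := mul_le_mul_of_nonneg_left (hGB 0 ω i) (by linarith : (0:ℝ) ≤ 1 - β₁)
      nlinarith [mul_nonneg hβ₁0 hB0]
    | succ m ih =>
      intro ω i
      have h := hMrec (m + 1) ω
      have e : ((m + 1 : ℕ) : ℤ) - 1 = (m : ℤ) := by push_cast; ring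
      rw [e] at h
      rw [h]
      have e2 : col (β₁ • M (m : ℤ) ω + (1 - β₁) • G (m + 1) ω) i
          = β₁ • col (M (m : ℤ) ω) i + (1 - β₁) • col (G (m + 1) ω) i := by
        ext k
        simp [col]
      rw [e2]
      calc ‖β₁ • col (M (m : ℤ) ω) i + (1 - β₁) • col (G (m + 1) ω) i‖
          ≤ ‖β₁ • col (M (m : ℤ) ω) i‖ + ‖(1 - β₁) • col (G (m + 1) ω) i‖ := norm_add_le _ _
        _ = β₁ * ‖col (M (m : ℤ) ω) i‖ + (1 - β₁) * ‖col (G (m + 1) ω) i‖ := by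
            rw [norm_smul, norm_smul, Real.norm_eq_abs, Real.norm_eq_abs,
              abs_of_nonneg hβ₁0, abs_of_nonneg (by linarith : (0:ℝ) ≤ 1 - β₁)]
        _ ≤ β₁ * B + (1 - β₁) * B := by
            have h1 := mul_le_mul_of_nonneg_left (ih ω i) hβ₁0
            have h2 := mul_le_mul_of_nonneg_left (hGB (m + 1) ω i)
              (by linarith : (0:ℝ) ≤ 1 - β₁)
            linarith
        _ = B := by ring
  have hMsq : ∀ t : ℕ, ∀ ω (i : Fin n), ∑ k, (M (t : ℤ) ω k i) ^ 2 ≤ B ^ 2 := by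
    intro t ω i
    have h := hMcol t ω i
    have he : ‖col (M (t : ℤ) ω) i‖ ^ 2 = ∑ k, (M (t : ℤ) ω k i) ^ 2 := by
      rw [EuclideanSpace.norm_eq,
        Real.sq_sqrt (Finset.sum_nonneg fun _ _ => sq_nonneg _)]
      refine Finset.sum_congr rfl fun k _ => ?_
      simp [col, sq_abs]
    rw [← he]
    exact pow_le_pow_left₀ (norm_nonneg _) h 2
  -- Frobenius bound on Y
  have hYsq : ∀ (t : ℕ) ω, frobSq (Y t ω) ≤ (n : ℝ) * B ^ 2 / δ := by
    intro t ω
    rw [hY t ω]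
    calc frobSq (Matrix.of fun k i => M (t : ℤ) ω k i / Real.sqrt (U ((t : ℤ) - 1) ω k i + δ))
        = ∑ k, ∑ i, (M (t : ℤ) ω k i) ^ 2 / (U ((t : ℤ) - 1) ω k i + δ) := by
          refine Finset.sum_congr rfl fun k _ => Finset.sum_congr rfl fun i _ => ?_
          rw [Matrix.of_apply, div_pow,
            Real.sq_sqrt (by linarith [hUpos ((t : ℤ) - 1) ω k i] : (0:ℝ) ≤ U ((t : ℤ) - 1) ω k i + δ)]
      _ ≤ ∑ k, ∑ i, (M (t : ℤ) ω k i) ^ 2 / δ := by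
          refine Finset.sum_le_sum fun k _ => Finset.sum_le_sum fun i _ => ?_
          apply div_le_div_of_nonneg_left (sq_nonneg _) hδ
          linarith [hUpos ((t : ℤ) - 1) ω k i]
      _ = (∑ i : Fin n, ∑ k, (M (t : ℤ) ω k i) ^ 2) / δ := by
          rw [Finset.sum_div]
          simp only [Finset.sum_div]
          exact Finset.sum_comm
      _ ≤ (∑ _i : Fin n, B ^ 2) / δ := by
          gcongr with i _
          exact hMsq t ω i
      _ = (n : ℝ) * B ^ 2 / δ := by
          simp [Finset.sum_const, Finset.card_univ, nsmul_eq_mul]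
  -- the projection bound, for integrability
  have projle : ∀ (A : Matrix (Fin d) (Fin n) ℝ), frobSq (A * (1 - Jmat n)) ≤ frobSq A := by
    intro A
    have := frobSq_mul_le A (1 - Jmat n) (proj_vec_bound hn)
    simpa using this
  -- the pointwise (per ω) inequality
  have hpoint : ∀ ω, frobSq (X ((r + 1) * K) ω * (1 - Jmat n))
      ≤ (1 + γ * (1 - ρ) / 16) * (1 - γ * (1 - ρ) / 2) ^ 2
            * frobSq (X (r * K) ω * (1 - Jmat n))
        + 4 * (1 + γ * (1 - ρ) / 16) * γ * (1 + 2 / (1 - ρ))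
            * frobSq (X (r * K) ω - Xu ((r + 1) * K) ω)
        + 2 * (1 + 16 / (γ * (1 - ρ))) * α ^ 2 * (K : ℝ) ^ 2 * (n : ℝ) * B ^ 2 / δ := by
    intro ω
    set SS : Matrix (Fin d) (Fin n) ℝ := α • ∑ j ∈ Finset.range K, Y (r * K + j) ω with hSS
    set Z : Matrix (Fin d) (Fin n) ℝ := X (r * K) ω * (1 - Jmat n) with hZ
    set Dm : Matrix (Fin d) (Fin n) ℝ := X (r * K) ω - Xu ((r + 1) * K) ω with hDm
    set P : Matrix (Fin d) (Fin n) ℝ := (1 - γ) • Z + γ • (Z * (W - Jmat n)) with hP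
    set Qm : Matrix (Fin d) (Fin n) ℝ := (-γ) • (Dm * (W - 1)) with hQm
    set Rm : Matrix (Fin d) (Fin n) ℝ := (-(1:ℝ)) • (SS * (1 - Jmat n)) with hRm
    have hid : X ((r + 1) * K) ω * (1 - Jmat n) = (P + Qm) + Rm := by
      rw [hXform ω, hP, hQm, hRm, hZ, hDm]
      exact keyid (X (r * K) ω) (Xu ((r + 1) * K) ω) SS W hn hWrow hWcol γ
    have hγle1 : (0:ℝ) ≤ 1 - γ := by linarith
    -- bound on P
    have hWJfrob : frob (Z * (W - Jmat n)) ≤ ρ * frob Z := by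
      apply frob_le_of_sq_le (mul_nonneg hρ0 (frob_nonneg Z))
      rw [mul_pow, frob_sq, hρ]
      exact frobSq_mul_le Z _ (vecMul_sq_le _)
    have hfP : frob P ≤ (1 - γ * (1 - ρ)) * frob Z := by
      calc frob P ≤ frob ((1 - γ) • Z) + frob (γ • (Z * (W - Jmat n))) := frob_add_le _ _
        _ = (1 - γ) * frob Z + γ * frob (Z * (W - Jmat n)) := by
            rw [frob_smul, frob_smul, abs_of_nonneg hγle1, abs_of_nonneg hγ0.le]
        _ ≤ (1 - γ) * frob Z + γ * (ρ * frob Z) := by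
            have := mul_le_mul_of_nonneg_left hWJfrob hγ0.le
            linarith
        _ = (1 - γ * (1 - ρ)) * frob Z := by ring
    -- bound on Q
    have hDW : frob (Dm * W) ≤ frob Dm := by
      apply frob_le_of_sq_le (frob_nonneg Dm)
      rw [frob_sq]
      have h := frobSq_mul_le Dm W (stoch_vec_bound W hWpos hWrow hWcol)
      simpa using h
    have hfQ : frob Qm ≤ 2 * γ * frob Dm := by
      have e : Dm * (W - 1) = Dm * W - Dm := by rw [Matrix.mul_sub, Matrix.mul_one]
      calc frob Qm = γ * frob (Dm * (W - 1)) := by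
            rw [hQm, frob_smul, abs_neg, abs_of_nonneg hγ0.le]
        _ ≤ γ * (frob (Dm * W) + frob Dm) := by
            rw [e]
            exact mul_le_mul_of_nonneg_left (frob_sub_le _ _) hγ0.le
        _ ≤ γ * (2 * frob Dm) := by
            apply mul_le_mul_of_nonneg_left _ hγ0.le
            linarith
        _ = 2 * γ * frob Dm := by ring
    -- bound on R
    have hfSS : frob SS ≤ α * (K : ℝ) * Real.sqrt ((n : ℝ) * B ^ 2 / δ) := by
      calc frob SS = α * frob (∑ j ∈ Finset.range K, Y (r * K + j) ω) := by
            rw [hSS, frob_smul, abs_of_nonneg hα.le]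
        _ ≤ α * ∑ j ∈ Finset.range K, frob (Y (r * K + j) ω) :=
            mul_le_mul_of_nonneg_left (frob_sum_le _ _) hα.le
        _ ≤ α * ∑ _j ∈ Finset.range K, Real.sqrt ((n : ℝ) * B ^ 2 / δ) := by
            apply mul_le_mul_of_nonneg_left _ hα.le
            exact Finset.sum_le_sum fun j _ => Real.sqrt_le_sqrt (hYsq _ ω)
        _ = α * ((K : ℝ) * Real.sqrt ((n : ℝ) * B ^ 2 / δ)) := by
            rw [Finset.sum_const, Finset.card_range, nsmul_eq_mul]
        _ = α * (K : ℝ) * Real.sqrt ((n : ℝ) * B ^ 2 / δ) := by ring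
    have hRfrobSq : frobSq Rm ≤ α ^ 2 * (K : ℝ) ^ 2 * ((n : ℝ) * B ^ 2 / δ) := by
      have h1 : frobSq Rm = frobSq (SS * (1 - Jmat n)) := by
        rw [hRm, frobSq_smul]
        norm_num
      have h2 : frobSq (SS * (1 - Jmat n)) ≤ frobSq SS := projle SS
      have h4 : frobSq SS ≤ (α * (K : ℝ) * Real.sqrt ((n : ℝ) * B ^ 2 / δ)) ^ 2 := by
        rw [← frob_sq]
        exact pow_le_pow_left₀ (frob_nonneg SS) hfSS 2
      have h5 : (α * (K : ℝ) * Real.sqrt ((n : ℝ) * B ^ 2 / δ)) ^ 2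
          = α ^ 2 * (K : ℝ) ^ 2 * ((n : ℝ) * B ^ 2 / δ) := by
        rw [mul_pow, mul_pow, Real.sq_sqrt hcK]
      linarith
    -- Young's inequality twice
    have hε₁ : (0:ℝ) < γ * (1 - ρ) / 16 := by linarith
    have h1ε₁ : (0:ℝ) ≤ 1 + γ * (1 - ρ) / 16 := by linarith
    have h1ε₁' : (0:ℝ) ≤ 1 + (γ * (1 - ρ) / 16)⁻¹ := by
      have := inv_pos.mpr hε₁
      linarith
    have h1ε₂ : (0:ℝ) ≤ 1 + γ * (1 - ρ) := by linarith
    have h1ε₂' : (0:ℝ) ≤ 1 + (γ * (1 - ρ))⁻¹ := by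
      have := inv_pos.mpr ha0
      linarith
    have hPsq : frobSq P ≤ ((1 - γ * (1 - ρ)) * frob Z) ^ 2 := by
      rw [← frob_sq]
      exact pow_le_pow_left₀ (frob_nonneg P) hfP 2
    have hQsq : frobSq Qm ≤ (2 * γ * frob Dm) ^ 2 := by
      rw [← frob_sq]
      exact pow_le_pow_left₀ (frob_nonneg Qm) hfQ 2
    calc frobSq (X ((r + 1) * K) ω * (1 - Jmat n)) = frobSq ((P + Qm) + Rm) := by rw [hid]
      _ ≤ (1 + γ * (1 - ρ) / 16) * frobSq (P + Qm)
          + (1 + (γ * (1 - ρ) / 16)⁻¹) * frobSq Rm := frobSq_add_le _ _ hε₁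
      _ ≤ (1 + γ * (1 - ρ) / 16)
            * ((1 + γ * (1 - ρ)) * ((1 - γ * (1 - ρ)) * frob Z) ^ 2
              + (1 + (γ * (1 - ρ))⁻¹) * (2 * γ * frob Dm) ^ 2)
          + (1 + (γ * (1 - ρ) / 16)⁻¹) * (α ^ 2 * (K : ℝ) ^ 2 * ((n : ℝ) * B ^ 2 / δ)) := by
          have i1 : frobSq (P + Qm) ≤ (1 + γ * (1 - ρ)) * ((1 - γ * (1 - ρ)) * frob Z) ^ 2
              + (1 + (γ * (1 - ρ))⁻¹) * (2 * γ * frob Dm) ^ 2 := by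
            refine le_trans (frobSq_add_le _ _ ha0) ?_
            exact add_le_add (mul_le_mul_of_nonneg_left hPsq h1ε₂)
              (mul_le_mul_of_nonneg_left hQsq h1ε₂')
          exact add_le_add (mul_le_mul_of_nonneg_left i1 h1ε₁)
            (mul_le_mul_of_nonneg_left hRfrobSq h1ε₁')
      _ ≤ (1 + γ * (1 - ρ) / 16) * (1 - γ * (1 - ρ) / 2) ^ 2 * (frob Z) ^ 2
          + 4 * (1 + γ * (1 - ρ) / 16) * γ * (1 + 2 / (1 - ρ)) * (frob Dm) ^ 2
          + 2 * (1 + 16 / (γ * (1 - ρ))) * (α ^ 2 * (K : ℝ) ^ 2 * ((n : ℝ) * B ^ 2 / δ)) :=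
          final_scalar (frob Z) (frob Dm) _ hρ0 hρ1 hγ0 hγ1 ha1
            (by positivity)
      _ = (1 + γ * (1 - ρ) / 16) * (1 - γ * (1 - ρ) / 2) ^ 2 * frobSq Z
          + 4 * (1 + γ * (1 - ρ) / 16) * γ * (1 + 2 / (1 - ρ)) * frobSq Dm
          + 2 * (1 + 16 / (γ * (1 - ρ))) * α ^ 2 * (K : ℝ) ^ 2 * (n : ℝ) * B ^ 2 / δ := by
          rw [frob_sq, frob_sq]
          ring
  -- measurability
  have entry_meas : ∀ (F : Ω → Matrix (Fin d) (Fin n) ℝ),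
      (∀ k i, Measurable fun ω => F ω k i) → Measurable fun ω => frobSq (F ω) := by
    intro F hF
    unfold frobSq
    exact Finset.measurable_sum _ fun k _ =>
      Finset.measurable_sum _ fun i _ => ((hF k i).pow_const 2)
  have measmul : ∀ t : ℕ, Measurable (fun ω => frobSq (X t ω * (1 - Jmat n))) := by
    intro t
    refine entry_meas _ fun k i => ?_
    simp only [Matrix.mul_apply]
    exact Finset.measurable_sum _ fun j _ => (hXmeas t k j).mul_const _
  have measF2 : Measurable (fun ω => frobSq (X (r * K) ω - Xu ((r + 1) * K) ω)) := by
    refine entry_meas _ fun k i => ?_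
    simp only [Matrix.sub_apply]
    exact (hXmeas (r * K) k i).sub (hXumeas ((r + 1) * K) k i)
  -- integrability
  have intF : ∀ t : ℕ, Integrable (fun ω => frobSq (X t ω * (1 - Jmat n))) μ := by
    intro t
    refine (hXint t).mono' (measmul t).aestronglyMeasurable ?_
    filter_upwards with ω
    rw [Real.norm_eq_abs, abs_of_nonneg (frobSq_nonneg _)]
    exact projle _
  have intF2 : Integrable (fun ω => frobSq (X (r * K) ω - Xu ((r + 1) * K) ω)) μ := by
    refine Integrable.mono'
      (g := fun ω => 2 * frobSq (X (r * K) ω) + 2 * frobSq (Xu ((r + 1) * K) ω))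
      (((hXint (r * K)).const_mul 2).add ((hXuint ((r + 1) * K)).const_mul 2))
      measF2.aestronglyMeasurable ?_
    filter_upwards with ω
    rw [Real.norm_eq_abs, abs_of_nonneg (frobSq_nonneg _)]
    exact frobSq_sub_le _ _
  -- integrate the pointwise inequality
  have intA : Integrable (fun ω => (1 + γ * (1 - ρ) / 16) * (1 - γ * (1 - ρ) / 2) ^ 2
      * frobSq (X (r * K) ω * (1 - Jmat n))) μ := (intF (r * K)).const_mul _
  have intB : Integrable (fun ω => 4 * (1 + γ * (1 - ρ) / 16) * γ * (1 + 2 / (1 - ρ))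
      * frobSq (X (r * K) ω - Xu ((r + 1) * K) ω)) μ := intF2.const_mul _
  have intAB : Integrable (fun ω =>
      (1 + γ * (1 - ρ) / 16) * (1 - γ * (1 - ρ) / 2) ^ 2
          * frobSq (X (r * K) ω * (1 - Jmat n))
        + 4 * (1 + γ * (1 - ρ) / 16) * γ * (1 + 2 / (1 - ρ))
            * frobSq (X (r * K) ω - Xu ((r + 1) * K) ω)) μ := intA.add intB
  have intRHS : Integrable (fun ω =>
      (1 + γ * (1 - ρ) / 16) * (1 - γ * (1 - ρ) / 2) ^ 2
          * frobSq (X (r * K) ω * (1 - Jmat n))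
        + 4 * (1 + γ * (1 - ρ) / 16) * γ * (1 + 2 / (1 - ρ))
            * frobSq (X (r * K) ω - Xu ((r + 1) * K) ω)
        + 2 * (1 + 16 / (γ * (1 - ρ))) * α ^ 2 * (K : ℝ) ^ 2 * (n : ℝ) * B ^ 2 / δ) μ :=
    intAB.add (integrable_const _)
  calc ∫ ω, frobSq (X ((r + 1) * K) ω * (1 - Jmat n)) ∂μ
      ≤ ∫ ω, ((1 + γ * (1 - ρ) / 16) * (1 - γ * (1 - ρ) / 2) ^ 2
            * frobSq (X (r * K) ω * (1 - Jmat n))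
          + 4 * (1 + γ * (1 - ρ) / 16) * γ * (1 + 2 / (1 - ρ))
              * frobSq (X (r * K) ω - Xu ((r + 1) * K) ω)
          + 2 * (1 + 16 / (γ * (1 - ρ))) * α ^ 2 * (K : ℝ) ^ 2 * (n : ℝ) * B ^ 2 / δ) ∂μ :=
        integral_mono (intF ((r + 1) * K)) intRHS hpoint
    _ = (1 + γ * (1 - ρ) / 16) * (1 - γ * (1 - ρ) / 2) ^ 2
            * ∫ ω, frobSq (X (r * K) ω * (1 - Jmat n)) ∂μ
        + 4 * (1 + γ * (1 - ρ) / 16) * γ * (1 + 2 / (1 - ρ))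
            * ∫ ω, frobSq (X (r * K) ω - Xu ((r + 1) * K) ω) ∂μ
        + 2 * (1 + 16 / (γ * (1 - ρ))) * α ^ 2 * (K : ℝ) ^ 2 * (n : ℝ) * B ^ 2 / δ := by
        rw [integral_add intAB (integrable_const _),
          integral_add intA intB,
          integral_const_mul, integral_const_mul, integral_const]
        simp [measure_univ]
end
end

section
/- Let ρ̂ = 1 − ρ and let 0 < γ ≤ (1−ρ)(1−η²)/100. Then the sequences generated by Algorithm LoDAdaC satisfy, for every r ∈ {0,…,T−1}: E[‖X^{(r+1)K} − X̲^{(r+2)K}‖²] ≤ 4γ²(1 + γρ̂/16)·(4/(1−η²))·E[‖X_⊥^{rK}‖²] + ((3+η²)/4)·(1+8γ)·(1+γρ̂/16)·E[‖X^{rK} − X̲^{(r+1)K}‖²] + (3(1 + 16/(γρ̂)) + 2(1 + 4/(1−η²)))·α²K²nB²·δ^{−1}. -/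
open MeasureTheory Finset Real
open scoped RealInnerProductSpace

noncomputable section

section LoDAdaCAux

variable {d n : ℕ}

lemma frobSq_neg (A : Matrix (Fin d) (Fin n) ℝ) : frobSq (-A) = frobSq A := by
  simp [frobSq]

lemma frobSq_young {c : ℝ} (hc : 0 < c) (A B : Matrix (Fin d) (Fin n) ℝ) :
    frobSq (A + B) ≤ (1 + c) * frobSq A + (1 + 1/c) * frobSq B := by
  have h : ∀ k i, ((A + B) k i) ^ 2 ≤ (1 + c) * (A k i) ^ 2 + (1 + 1/c) * (B k i) ^ 2 := by
    intro k i
    have hid : (1 + 1/c) = (c+1)/c := by field_simp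
    have key : c * (A k i + B k i) ^ 2 ≤ c * ((1 + c) * (A k i) ^ 2 + (1 + 1/c) * (B k i) ^ 2) := by
      have h1 : c * (1/c) = 1 := by field_simp
      nlinarith [sq_nonneg (c * A k i - B k i)]
    have key2 := le_of_mul_le_mul_left key hc
    simpa [Matrix.add_apply, hid, div_mul_eq_mul_div] using key2
  calc frobSq (A + B) ≤ ∑ k, ∑ i, ((1 + c) * (A k i) ^ 2 + (1 + 1/c) * (B k i) ^ 2) := by
        refine Finset.sum_le_sum fun k _ => Finset.sum_le_sum fun i _ => h k i
    _ = (1 + c) * frobSq A + (1 + 1/c) * frobSq B := by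
        simp [frobSq, Finset.sum_add_distrib, Finset.mul_sum]

lemma frobSq_sum_le (K : ℕ) (M : ℕ → Matrix (Fin d) (Fin n) ℝ) :
    frobSq (∑ t ∈ Finset.range K, M t) ≤ K * ∑ t ∈ Finset.range K, frobSq (M t) := by
  have h : ∀ k i, ((∑ t ∈ Finset.range K, M t) k i) ^ 2
      ≤ K * ∑ t ∈ Finset.range K, (M t k i) ^ 2 := by
    intro k i
    have := Finset.sum_mul_sq_le_sq_mul_sq (Finset.range K) (fun _ => (1:ℝ))
      (fun t => M t k i)
    simpa [Finset.sum_apply', Matrix.sum_apply] using this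
  calc frobSq (∑ t ∈ Finset.range K, M t)
      ≤ ∑ k, ∑ i, ((K : ℝ) * ∑ t ∈ Finset.range K, (M t k i) ^ 2) := by
        refine Finset.sum_le_sum fun k _ => Finset.sum_le_sum fun i _ => h k i
    _ = K * ∑ t ∈ Finset.range K, frobSq (M t) := by
        simp only [frobSq, ← Finset.mul_sum]
        congr 1
        calc ∑ k : Fin d, ∑ i : Fin n, ∑ t ∈ Finset.range K, (M t k i) ^ 2
            = ∑ k : Fin d, ∑ t ∈ Finset.range K, ∑ i : Fin n, (M t k i) ^ 2 :=
              Finset.sum_congr rfl fun k _ => Finset.sum_comm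
          _ = ∑ t ∈ Finset.range K, ∑ k : Fin d, ∑ i : Fin n, (M t k i) ^ 2 :=
              Finset.sum_comm

lemma frobSq_col_eq (A : Matrix (Fin d) (Fin n) ℝ) :
    frobSq A = ∑ i, ‖col A i‖ ^ 2 := by
  have h : ∀ i : Fin n, ‖col A i‖ ^ 2 = ∑ k, (A k i) ^ 2 := by
    intro i
    rw [EuclideanSpace.norm_eq, Real.sq_sqrt (Finset.sum_nonneg fun _ _ => sq_nonneg _)]
    simp [col]
  simp only [h, frobSq]
  exact Finset.sum_comm

lemma frobSq_mulW_le {W : Matrix (Fin n) (Fin n) ℝ}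
    (hWpos : ∀ i j, 0 ≤ W i j) (hWrow : ∀ i, ∑ j, W i j = 1) (hWcol : ∀ j, ∑ i, W i j = 1)
    (A : Matrix (Fin d) (Fin n) ℝ) : frobSq (A * W) ≤ frobSq A := by
  have hrow : ∀ k : Fin d, ∑ i, ((A * W) k i) ^ 2 ≤ ∑ j, (A k j) ^ 2 := by
    intro k
    have h1 : ∀ i : Fin n, ((A * W) k i) ^ 2 ≤ ∑ j, (A k j) ^ 2 * W j i := by
      intro i
      have hcs := Finset.sum_mul_sq_le_sq_mul_sq Finset.univ
        (fun j => Real.sqrt (W j i)) (fun j => A k j * Real.sqrt (W j i))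
      have he : ∀ j : Fin n, Real.sqrt (W j i) * (A k j * Real.sqrt (W j i)) = A k j * W j i := by
        intro j
        calc Real.sqrt (W j i) * (A k j * Real.sqrt (W j i))
            = A k j * (Real.sqrt (W j i) * Real.sqrt (W j i)) := by ring
          _ = A k j * W j i := by rw [Real.mul_self_sqrt (hWpos j i)]
      have he2 : ∀ j : Fin n, (Real.sqrt (W j i)) ^ 2 = W j i := fun j => Real.sq_sqrt (hWpos j i)
      have he3 : ∀ j : Fin n, (A k j * Real.sqrt (W j i)) ^ 2 = (A k j) ^ 2 * W j i := by
        intro j; rw [mul_pow, he2]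
      simp only [he, he2, he3] at hcs
      calc ((A * W) k i) ^ 2 = (∑ j, A k j * W j i) ^ 2 := by rw [Matrix.mul_apply]
        _ ≤ (∑ j, W j i) * ∑ j, (A k j) ^ 2 * W j i := hcs
        _ = ∑ j, (A k j) ^ 2 * W j i := by rw [hWcol i, one_mul]
    calc ∑ i, ((A * W) k i) ^ 2 ≤ ∑ i : Fin n, ∑ j, (A k j) ^ 2 * W j i :=
          Finset.sum_le_sum fun i _ => h1 i
      _ = ∑ j : Fin n, (A k j) ^ 2 * ∑ i, W j i := by
          rw [Finset.sum_comm]; simp [Finset.mul_sum]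
      _ = ∑ j, (A k j) ^ 2 := by simp [hWrow]
  exact Finset.sum_le_sum fun k _ => hrow k

lemma frobSq_mulWsub_le {W : Matrix (Fin n) (Fin n) ℝ}
    (hWpos : ∀ i j, 0 ≤ W i j) (hWrow : ∀ i, ∑ j, W i j = 1) (hWcol : ∀ j, ∑ i, W i j = 1)
    (A : Matrix (Fin d) (Fin n) ℝ) : frobSq (A * (W - 1)) ≤ 4 * frobSq A := by
  have h1 : A * (W - 1) = A * W - A := by rw [Matrix.mul_sub, Matrix.mul_one]
  calc frobSq (A * (W - 1)) = frobSq (A * W - A) := by rw [h1]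
    _ ≤ 2 * frobSq (A * W) + 2 * frobSq A := frobSq_sub_le _ _
    _ ≤ 2 * frobSq A + 2 * frobSq A := by
        have := frobSq_mulW_le hWpos hWrow hWcol A; linarith
    _ = 4 * frobSq A := by ring

lemma frobSq_mulprojJ_le (hn : 0 < n) (A : Matrix (Fin d) (Fin n) ℝ) :
    frobSq (A * ((1 : Matrix (Fin n) (Fin n) ℝ) - Jmat n)) ≤ frobSq A := by
  have happ : ∀ (k : Fin d) (i : Fin n),
      (A * ((1 : Matrix (Fin n) (Fin n) ℝ) - Jmat n)) k i = A k i - (∑ j, A k j) / n := by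
    intro k i
    rw [Matrix.mul_apply]
    have : ∀ j : Fin n, A k j * (1 - Jmat n) j i
        = (if j = i then A k j else 0) - A k j / n := by
      intro j
      simp only [Matrix.sub_apply, Matrix.one_apply, Jmat, Matrix.of_apply]
      split <;> ring_nf <;> field_simp
    simp only [this, Finset.sum_sub_distrib, Finset.sum_ite_eq' Finset.univ i,
      Finset.mem_univ, if_true]
    rw [← Finset.sum_div]
  refine Finset.sum_le_sum fun k _ => ?_
  set m := (∑ j, A k j) / n with hm
  have hsum : ∑ i : Fin n, (A k i - m) ^ 2
      = ∑ i, (A k i) ^ 2 - 2 * m * (∑ i, A k i) + n * m ^ 2 := by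
    simp only [sub_sq]
    rw [Finset.sum_add_distrib, Finset.sum_sub_distrib, Finset.sum_const, Finset.card_univ,
      Fintype.card_fin, nsmul_eq_mul]
    have h2 : ∑ x : Fin n, 2 * A k x * m = 2 * m * ∑ i, A k i := by
      rw [Finset.mul_sum]
      exact Finset.sum_congr rfl fun x _ => by ring
    rw [h2]
  have hmn : (∑ i, A k i) = n * m := by
    rw [hm]; field_simp
  calc ∑ i, ((A * ((1 : Matrix (Fin n) (Fin n) ℝ) - Jmat n)) k i) ^ 2
      = ∑ i, (A k i - m) ^ 2 := by
        refine Finset.sum_congr rfl fun i _ => by rw [happ]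
    _ = ∑ i, (A k i) ^ 2 - n * m ^ 2 := by rw [hsum, hmn]; ring
    _ ≤ ∑ i, (A k i) ^ 2 := by
        have h3 : (0:ℝ) ≤ (n : ℝ) * m ^ 2 := by positivity
        linarith

lemma Jmat_mul_Wsub {W : Matrix (Fin n) (Fin n) ℝ} (hn : 0 < n)
    (hWcol : ∀ j, ∑ i, W i j = 1) : Jmat n * (W - 1) = 0 := by
  ext j i
  rw [Matrix.mul_apply]
  simp only [Jmat, Matrix.of_apply, Matrix.sub_apply, Matrix.one_apply, Matrix.zero_apply]
  have h1 : ∑ l : Fin n, (n:ℝ)⁻¹ * (W l i - if l = i then 1 else 0)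
      = (n:ℝ)⁻¹ * ∑ l : Fin n, (W l i - if l = i then 1 else 0) := (Finset.mul_sum _ _ _).symm
  have h2 : ∑ l : Fin n, (W l i - if l = i then 1 else 0) = (∑ l, W l i) - 1 := by
    rw [Finset.sum_sub_distrib]
    congr 1
    simp [Finset.sum_ite_eq' Finset.univ i]
  rw [h1, h2, hWcol i]
  simp

lemma mulWsub_eq_proj (A : Matrix (Fin d) (Fin n) ℝ) {W : Matrix (Fin n) (Fin n) ℝ} (hn : 0 < n)
    (hWcol : ∀ j, ∑ i, W i j = 1) : A * (W - 1) = (A * (1 - Jmat n)) * (W - 1) := by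
  rw [Matrix.mul_assoc, Matrix.sub_mul, Matrix.one_mul, Jmat_mul_Wsub hn hWcol, sub_zero]

lemma colSq_eq (A : Matrix (Fin d) (Fin n) ℝ) (i : Fin n) :
    ‖col A i‖ ^ 2 = ∑ k, (A k i) ^ 2 := by
  rw [EuclideanSpace.norm_eq, Real.sq_sqrt (Finset.sum_nonneg fun _ _ => sq_nonneg _)]
  simp [col]

lemma col_sq_le_frobSq (A : Matrix (Fin d) (Fin n) ℝ) (i : Fin n) :
    ‖col A i‖ ^ 2 ≤ frobSq A := by
  rw [frobSq_col_eq]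
  exact Finset.single_le_sum (f := fun j => ‖col A j‖ ^ 2)
    (fun j _ => sq_nonneg _) (Finset.mem_univ i)

variable {Ω : Type} [MeasurableSpace Ω]

lemma measurable_frobSq {F : Ω → Matrix (Fin d) (Fin n) ℝ}
    (h : ∀ k i, Measurable fun ω => F ω k i) :
    Measurable fun ω => frobSq (F ω) := by
  unfold frobSq
  exact Finset.measurable_sum _ fun k _ => Finset.measurable_sum _ fun i _ => (h k i).pow_const 2

lemma measurable_colSq {F : Ω → Matrix (Fin d) (Fin n) ℝ}
    (h : ∀ k i, Measurable fun ω => F ω k i) (i : Fin n) :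
    Measurable fun ω => ‖col (F ω) i‖ ^ 2 := by
  have : (fun ω => ‖col (F ω) i‖ ^ 2) = fun ω => ∑ k, (F ω k i) ^ 2 := by
    funext ω; rw [colSq_eq]
  rw [this]
  exact Finset.measurable_sum _ fun k _ => (h k i).pow_const 2

lemma integrable_of_bound (μ : MeasureTheory.Measure Ω) {f g : Ω → ℝ} (hf : Measurable f)
    (h0 : ∀ ω, 0 ≤ f ω) (hle : ∀ ω, f ω ≤ g ω) (hg : MeasureTheory.Integrable g μ) :
    MeasureTheory.Integrable f μ :=
  hg.mono' hf.aestronglyMeasurable (MeasureTheory.ae_of_all _ fun ω => by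
    rw [Real.norm_of_nonneg (h0 ω)]; exact hle ω)

lemma step_bound (μ : MeasureTheory.Measure Ω) [MeasureTheory.IsProbabilityMeasure μ]
    {F G : Ω → Matrix (Fin d) (Fin n) ℝ} {c1 c2 Nv : ℝ}
    (hGint : MeasureTheory.Integrable (fun ω => frobSq (G ω)) μ)
    (hpt : ∀ ω, frobSq (F ω) ≤ c1 * frobSq (G ω) + c2 * Nv) :
    ∫ ω, frobSq (F ω) ∂μ ≤ c1 * ∫ ω, frobSq (G ω) ∂μ + c2 * Nv := by
  have h1 : ∫ ω, frobSq (F ω) ∂μ ≤ ∫ ω, (c1 * frobSq (G ω) + c2 * Nv) ∂μ :=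
    MeasureTheory.integral_mono_of_nonneg (MeasureTheory.ae_of_all _ fun ω => frobSq_nonneg _)
      ((hGint.const_mul c1).add (MeasureTheory.integrable_const _))
      (MeasureTheory.ae_of_all _ hpt)
  rwa [MeasureTheory.integral_add (hGint.const_mul c1) (MeasureTheory.integrable_const _),
    MeasureTheory.integral_const_mul, MeasureTheory.integral_const, probReal_univ,
    one_smul] at h1

lemma step_bound2 (μ : MeasureTheory.Measure Ω) [MeasureTheory.IsProbabilityMeasure μ]
    {F G H : Ω → Matrix (Fin d) (Fin n) ℝ} {c1 c2 : ℝ}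
    (hGint : MeasureTheory.Integrable (fun ω => frobSq (G ω)) μ)
    (hHint : MeasureTheory.Integrable (fun ω => frobSq (H ω)) μ)
    (hpt : ∀ ω, frobSq (F ω) ≤ c1 * frobSq (G ω) + c2 * frobSq (H ω)) :
    ∫ ω, frobSq (F ω) ∂μ ≤ c1 * ∫ ω, frobSq (G ω) ∂μ + c2 * ∫ ω, frobSq (H ω) ∂μ := by
  have h1 : ∫ ω, frobSq (F ω) ∂μ ≤ ∫ ω, (c1 * frobSq (G ω) + c2 * frobSq (H ω)) ∂μ :=
    MeasureTheory.integral_mono_of_nonneg (MeasureTheory.ae_of_all _ fun ω => frobSq_nonneg _)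
      ((hGint.const_mul c1).add (hHint.const_mul c2)) (MeasureTheory.ae_of_all _ hpt)
  rwa [MeasureTheory.integral_add (hGint.const_mul c1) (hHint.const_mul c2),
    MeasureTheory.integral_const_mul, MeasureTheory.integral_const_mul] at h1

end LoDAdaCAux
section coefs
variable {u γ ρh : ℝ}

lemma coef_basic (hu0 : 0 ≤ u) (hu1 : u < 1) (hρ0 : 0 < ρh) (hρ1 : ρh ≤ 1)
    (hγ0 : 0 < γ) (hγ : γ ≤ ρh * (1 - u) / 100) : γ ≤ 1/100 := by
  nlinarith [mul_le_mul hρ1 (show 1-u ≤ 1 by linarith) (by linarith : (0:ℝ) ≤ 1-u) zero_le_one]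

lemma coef_A6 (hu0 : 0 ≤ u) (hu1 : u < 1) (hρ0 : 0 < ρh) (hρ1 : ρh ≤ 1)
    (hγ0 : 0 < γ) (hγ : γ ≤ ρh * (1 - u) / 100) :
    (1 + γ*ρh/16)*u*(1+γ)*((4-u)/3)*(1+2*γ)^2*(1+γ)
      ≤ ((3+u)/4)*(1+8*γ)*(1 + γ*ρh/16) := by
  have h1u : (0:ℝ) < 1 - u := by linarith
  have hγ100 := coef_basic hu0 hu1 hρ0 hρ1 hγ0 hγ
  have hk0 : (0:ℝ) ≤ 1 + γ*ρh/16 := by positivity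
  have P1 : u*(4-u)/3 ≤ (3+u)/4 := by
    nlinarith [mul_nonneg (show (0:ℝ) ≤ 9-4*u by linarith) h1u.le]
  have hp2 : γ*γ ≤ γ*(1/100) := mul_le_mul_of_nonneg_left hγ100 hγ0.le
  have hp3 : γ*γ*γ ≤ γ*(1/100)*(1/100) := by nlinarith [hp2, hγ0.le, hγ100]
  have hp4 : γ*γ*γ*γ ≤ γ*(1/100)*(1/100)*(1/100) := by nlinarith [hp3, hγ0.le, hγ100]
  have P2 : (1+γ)^2*(1+2*γ)^2 ≤ 1+8*γ := by nlinarith [hγ0.le, hp2, hp3, hp4]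
  have poly : u*(1+γ)*((4-u)/3)*(1+2*γ)^2*(1+γ) ≤ ((3+u)/4)*(1+8*γ) := by
    calc u*(1+γ)*((4-u)/3)*(1+2*γ)^2*(1+γ) = (u*(4-u)/3)*((1+γ)^2*(1+2*γ)^2) := by ring
      _ ≤ ((3+u)/4)*(1+8*γ) := by
          refine mul_le_mul P1 P2 (by positivity) (by linarith)
  nlinarith [mul_le_mul_of_nonneg_left poly hk0]

lemma coef_A7 (hu0 : 0 ≤ u) (hu1 : u < 1) (hρ0 : 0 < ρh) (hρ1 : ρh ≤ 1)
    (hγ0 : 0 < γ) (hγ : γ ≤ ρh * (1 - u) / 100) :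
    (1 + γ*ρh/16)*u*(1+γ)*(1 + 3/(1-u))*(4*γ^2)*(5/4)
      ≤ 4*γ^2*(1 + γ*ρh/16)*(4/(1-u)) := by
  have h1u : (0:ℝ) < 1 - u := by linarith
  have hγ100 := coef_basic hu0 hu1 hρ0 hρ1 hγ0 hγ
  have hru : 1 + 3/(1-u) = (4-u)/(1-u) := by field_simp; ring
  have key7 : 5*(u*((1+γ)*(4-u))) ≤ 16 := by
    have h_a : u*(4-u) ≤ 3 := by nlinarith [mul_nonneg h1u.le (show (0:ℝ) ≤ 3-u by linarith)]
    nlinarith [mul_le_mul_of_nonneg_left h_a (show (0:ℝ) ≤ 5*(1+γ) by linarith)]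
  have base7 : (0:ℝ) ≤ (1 + γ*ρh/16)*γ^2/(1-u) := by positivity
  have expand : 4*γ^2*(1 + γ*ρh/16)*(4/(1-u))
      - (1 + γ*ρh/16)*u*(1+γ)*((4-u)/(1-u))*(4*γ^2)*(5/4)
      = ((1 + γ*ρh/16)*γ^2/(1-u)) * (16 - 5*(u*((1+γ)*(4-u)))) := by
    field_simp
    ring
  have hpos := mul_nonneg base7 (show (0:ℝ) ≤ 16 - 5*(u*((1+γ)*(4-u))) by linarith)
  rw [hru]
  linarith [expand ▸ hpos]

set_option maxHeartbeats 1000000 in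
lemma coef_AN (hu0 : 0 ≤ u) (hu1 : u < 1) (hρ0 : 0 < ρh) (hρ1 : ρh ≤ 1)
    (hγ0 : 0 < γ) (hγ : γ ≤ ρh * (1 - u) / 100) :
    (1 + γ*ρh/16)*u*(1+γ)*(((4-u)/3)*(1+2*γ)^2*(1+1/γ) + (1 + 3/(1-u))*(4*γ^2)*5)
      + (1 + γ*ρh/16)*u*(1+1/γ) + (1 + 16/(γ*ρh))
      ≤ 3*(1 + 16/(γ*ρh)) + 2*(1 + 4/(1-u)) := by
  have h1u : (0:ℝ) < 1 - u := by linarith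
  have hγ100 := coef_basic hu0 hu1 hρ0 hρ1 hγ0 hγ
  have hk0 : (0:ℝ) ≤ 1 + γ*ρh/16 := by positivity
  have hk2 : 1 + γ*ρh/16 ≤ 2 := by
    nlinarith [mul_le_mul hγ100 hρ1 hρ0.le (by norm_num : (0:ℝ) ≤ 1/100)]
  have hru : 1 + 3/(1-u) = (4-u)/(1-u) := by field_simp; ring
  have hγ' : γ*100 ≤ ρh*(1-u) := (le_div_iff₀ (show (0:ℝ) < 100 by norm_num)).mp hγ
  have hb1 : γ/(1-u) ≤ ρh/100 := by
    rw [div_le_div_iff₀ h1u (show (0:ℝ) < 100 by norm_num)]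
    linarith
  have hbb : γ*γ/(1-u) ≤ 1/10000 := by
    calc γ*γ/(1-u) = γ*(γ/(1-u)) := by ring
      _ ≤ (1/100)*(1/100) := by
          refine mul_le_mul hγ100 (le_trans hb1 ?_) (div_nonneg hγ0.le h1u.le) (by norm_num)
          linarith
      _ = 1/10000 := by norm_num
  have f2 : (1 + γ*ρh/16)*u*(1+γ) ≤ 4 := by nlinarith [mul_nonneg hk0 hu0]
  have f2' : (0:ℝ) ≤ (1 + γ*ρh/16)*u*(1+γ) := by positivity
  have tb : (1 + γ*ρh/16)*u*(1+γ)*(1 + 3/(1-u))*(4*γ^2)*5 ≤ 1 := by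
    rw [hru]
    have heq : (1 + γ*ρh/16)*u*(1+γ)*((4-u)/(1-u))*(4*γ^2)*5
        = ((1 + γ*ρh/16)*u*(1+γ)*(4-u)*20)*(γ*γ/(1-u)) := by
      field_simp
      ring
    rw [heq]
    have f3 : (1 + γ*ρh/16)*u*(1+γ)*(4-u)*20 ≤ 320 := by nlinarith [f2, f2']
    have f3' : (0:ℝ) ≤ (1 + γ*ρh/16)*u*(1+γ)*(4-u)*20 :=
      mul_nonneg (mul_nonneg f2' (by linarith)) (by norm_num)
    calc ((1 + γ*ρh/16)*u*(1+γ)*(4-u)*20)*(γ*γ/(1-u)) ≤ 320 * (1/10000) := by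
          refine mul_le_mul f3 hbb (by positivity) (by norm_num)
      _ ≤ 1 := by norm_num
  have hv0 : (0:ℝ) ≤ 1+1/γ := by positivity
  have ta : (1 + γ*ρh/16)*u*(1+γ)*((4-u)/3)*(1+2*γ)^2*(1+1/γ) ≤ (32/3)*(1+1/γ) := by
    have hsq : (1+2*γ)^2 ≤ 2 := by nlinarith [hγ100, hγ0.le, mul_le_mul_of_nonneg_left hγ100 hγ0.le]
    have g0 : (1 + γ*ρh/16)*u*(1+γ)*((4-u)/3) ≤ 16/3 := by nlinarith [f2, f2']
    have g0' : (0:ℝ) ≤ (1 + γ*ρh/16)*u*(1+γ)*((4-u)/3) :=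
      mul_nonneg f2' (div_nonneg (by linarith) (by norm_num))
    have g1 : (1 + γ*ρh/16)*u*(1+γ)*((4-u)/3)*(1+2*γ)^2 ≤ 32/3 :=
      le_trans (mul_le_mul g0 hsq (sq_nonneg (1+2*γ)) (by norm_num : (0:ℝ) ≤ 16/3)) (by norm_num)
    exact mul_le_mul_of_nonneg_right g1 hv0
  have tc : (1 + γ*ρh/16)*u*(1+1/γ) ≤ 2*(1+1/γ) := by
    have h1 : (1 + γ*ρh/16)*u ≤ 2 := le_trans (mul_le_of_le_one_right hk0 (by linarith)) hk2
    exact mul_le_mul_of_nonneg_right h1 hv0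
  have hrec : 16*(1/γ) ≤ 16/(γ*ρh) := by
    rw [show 16*(1/γ) = 16/γ by ring]
    exact div_le_div_of_nonneg_left (by norm_num) (mul_pos hγ0 hρ0)
      (mul_le_of_le_one_right hγ0.le hρ1)
  have h4u : (4:ℝ) ≤ 4/(1-u) := (le_div_iff₀ h1u).mpr (by nlinarith)
  have hv100 : (100:ℝ) ≤ 1/γ := (le_div_iff₀ hγ0).mpr (by linarith)
  have expand : (1 + γ*ρh/16)*u*(1+γ)*(((4-u)/3)*(1+2*γ)^2*(1+1/γ) + (1 + 3/(1-u))*(4*γ^2)*5)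
      = (1 + γ*ρh/16)*u*(1+γ)*((4-u)/3)*(1+2*γ)^2*(1+1/γ)
        + (1 + γ*ρh/16)*u*(1+γ)*(1 + 3/(1-u))*(4*γ^2)*5 := by ring
  rw [expand]
  linarith [ta, tb, tc, hrec, h4u, hv100]

end coefs

set_option maxHeartbeats 1000000 in
lemma final_combine (u γ ρh N e0 e1 e2 e3 e4 e5 e6 e7 : ℝ)
    (hu0 : 0 ≤ u) (hu1 : u < 1) (hρ0 : 0 < ρh) (hρ1 : ρh ≤ 1)
    (hγ0 : 0 < γ) (hγ : γ ≤ ρh * (1 - u) / 100)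
    (hN : 0 ≤ N) (h6 : 0 ≤ e6) (h7 : 0 ≤ e7)
    (s0 : e0 ≤ (1 + γ*ρh/16) * e1 + (1 + 16/(γ*ρh)) * N)
    (s1 : e1 ≤ u * e2)
    (s2 : e2 ≤ (1+γ) * e3 + (1 + 1/γ) * N)
    (s3 : e3 ≤ ((4-u)/3) * (1+2*γ)^2 * e4 + (1 + 3/(1-u)) * (4*γ^2) * e5)
    (s4 : e4 ≤ (1+γ) * e6 + (1 + 1/γ) * N)
    (s5 : e5 ≤ (5/4) * e7 + 5 * N) :
    e0 ≤ 4*γ^2 * (1 + γ*ρh/16) * (4/(1-u)) * e7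
      + ((3+u)/4) * (1+8*γ) * (1 + γ*ρh/16) * e6
      + (3*(1 + 16/(γ*ρh)) + 2*(1 + 4/(1-u))) * N := by
  have h1u : (0:ℝ) < 1 - u := by linarith
  have hk0 : (0:ℝ) ≤ 1 + γ*ρh/16 := by positivity
  have hc1 : (0:ℝ) ≤ (4-u)/3 * (1+2*γ)^2 :=
    mul_nonneg (div_nonneg (by linarith) (by norm_num)) (sq_nonneg _)
  have hc2 : (0:ℝ) ≤ (1 + 3/(1-u)) * (4*γ^2) := by
    have := div_nonneg (show (0:ℝ) ≤ 3 by norm_num) h1u.le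
    apply mul_nonneg (by linarith) (by positivity)
  obtain ⟨R3, hR3⟩ : ∃ R3 : ℝ, R3 = ((4-u)/3) * (1+2*γ)^2 * ((1+γ)*e6 + (1+1/γ)*N)
      + (1 + 3/(1-u)) * (4*γ^2) * ((5/4)*e7 + 5*N) := ⟨_, rfl⟩
  have q3 : e3 ≤ R3 := by
    rw [hR3]
    exact le_trans s3 (add_le_add (mul_le_mul_of_nonneg_left s4 hc1)
      (mul_le_mul_of_nonneg_left s5 hc2))
  have q2 : e2 ≤ (1+γ) * R3 + (1+1/γ)*N := by
    refine le_trans s2 ?_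
    have := mul_le_mul_of_nonneg_left q3 (show (0:ℝ) ≤ 1+γ by linarith)
    linarith
  have q1 : e1 ≤ u * ((1+γ) * R3 + (1+1/γ)*N) := le_trans s1 (mul_le_mul_of_nonneg_left q2 hu0)
  have q0 : e0 ≤ (1 + γ*ρh/16) * (u * ((1+γ) * R3 + (1+1/γ)*N)) + (1 + 16/(γ*ρh)) * N := by
    refine le_trans s0 ?_
    have := mul_le_mul_of_nonneg_left q1 hk0
    linarith
  have hR3e : (1 + γ*ρh/16) * (u * ((1+γ) * R3 + (1+1/γ)*N)) + (1 + 16/(γ*ρh)) * N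
      = ((1 + γ*ρh/16)*u*(1+γ)*((4-u)/3)*(1+2*γ)^2*(1+γ)) * e6
        + ((1 + γ*ρh/16)*u*(1+γ)*(1 + 3/(1-u))*(4*γ^2)*(5/4)) * e7
        + ((1 + γ*ρh/16)*u*(1+γ)*(((4-u)/3)*(1+2*γ)^2*(1+1/γ) + (1 + 3/(1-u))*(4*γ^2)*5)
            + (1 + γ*ρh/16)*u*(1+1/γ) + (1 + 16/(γ*ρh))) * N := by
    rw [hR3]; ring
  rw [hR3e] at q0
  have m6 := mul_le_mul_of_nonneg_right (coef_A6 hu0 hu1 hρ0 hρ1 hγ0 hγ) h6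
  have m7 := mul_le_mul_of_nonneg_right (coef_A7 hu0 hu1 hρ0 hρ1 hγ0 hγ) h7
  have mN := mul_le_mul_of_nonneg_right (coef_AN hu0 hu1 hρ0 hρ1 hγ0 hγ) hN
  linarith

set_option maxHeartbeats 2000000 in
/-- Lemma A.2(ii). With `ρ̂ = 1 − ρ` and `0 < γ ≤ (1−ρ)(1−η²)/100`, for every
`r ∈ {0,…,T−1}`:
`E‖X^{(r+1)K} − X̲^{(r+2)K}‖² ≤ 4γ²(1+γρ̂/16)(4/(1−η²)) E‖X⊥^{rK}‖²
  + ((3+η²)/4)(1+8γ)(1+γρ̂/16) E‖X^{rK} − X̲^{(r+1)K}‖²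
  + (3(1+16/(γρ̂)) + 2(1+4/(1−η²))) α²K²nB²/δ`. -/
theorem stmt2 (d n T K : ℕ) (hn : 0 < n) (hT : 0 < T) (hK : 0 < K)
    -- the underlying probability space
    (Ω : Type) [MeasurableSpace Ω] [StandardBorelSpace Ω]
    (μ : Measure Ω) [IsProbabilityMeasure μ]
    -- the filtration of the algorithm: `ℱ t` is the information up to the `t`-th iterate
    (ℱ : ℕ → MeasurableSpace Ω) (hℱ : ∀ t, ℱ t ≤ ‹MeasurableSpace Ω›)
    -- local objectives and parameters
    (f : Fin n → EuclideanSpace ℝ (Fin d) → ℝ)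
    (L B Binf ρ η α β₁ δ γ : ℝ)
    (W : Matrix (Fin n) (Fin n) ℝ)
    (x0 : EuclideanSpace ℝ (Fin d))
    -- iterate sequences of Algorithm LoDAdaC (random)
    (X Xu G : ℕ → Ω → Matrix (Fin d) (Fin n) ℝ)
    (M U : ℤ → Ω → Matrix (Fin d) (Fin n) ℝ)
    (Y : ℕ → Ω → Matrix (Fin d) (Fin n) ℝ)
    -- Assumption 1 (problem setup): each `fᵢ` is `L`-smooth and `f` is bounded below
    (hdiff : ∀ (i : Fin n) (x : EuclideanSpace ℝ (Fin d)), DifferentiableAt ℝ (f i) x)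
    (hLsmooth : ∀ (i : Fin n) (x y : EuclideanSpace ℝ (Fin d)),
      ‖gradient (f i) x - gradient (f i) y‖ ≤ L * ‖x - y‖)
    (hlow : BddBelow (Set.range fun x => (∑ i, f i x) / n))
    -- Assumption 2 (mixing matrix): `W` is doubly stochastic, `Null(W−I) = span{𝟙}` and
    -- `ρ = ‖W − J‖₂ < 1`
    (hWpos : ∀ i j, 0 ≤ W i j)
    (hWrow : ∀ i, ∑ j, W i j = 1)
    (hWcol : ∀ j, ∑ i, W i j = 1)
    (hWnull : ∀ v : Fin n → ℝ, W.mulVec v = v → ∃ c : ℝ, v = fun _ => c)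
    (hρ : ρ = specNorm (W - Jmat n)) (hρ1 : ρ < 1)
    -- algorithm parameters
    (hα : 0 < α) (hβ₁0 : 0 ≤ β₁) (hβ₁1 : β₁ < 1) (hδ : 0 < δ) (hη0 : 0 ≤ η) (hη1 : η < 1)
    -- initialization
    (hX0 : ∀ ω (k : Fin d) (i : Fin n), X 0 ω k i = x0 k)
    (hXu0 : ∀ ω (k : Fin d) (i : Fin n), Xu 0 ω k i = x0 k)
    (hM0 : ∀ ω, M (-1) ω = 0) (hU1 : ∀ ω, U (-1) ω = 0) (hU2 : ∀ ω, U (-2) ω = 0)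
    (hUpos : ∀ (t : ℤ) ω (k : Fin d) (i : Fin n), 0 ≤ U t ω k i)
    -- recursions of Algorithm LoDAdaC
    (hMrec : ∀ (t : ℕ) ω, M (t : ℤ) ω = β₁ • M ((t : ℤ) - 1) ω + (1 - β₁) • G t ω)
    (hY : ∀ (t : ℕ) ω,
      Y t ω = Matrix.of fun k i => M (t : ℤ) ω k i / Real.sqrt (U ((t : ℤ) - 1) ω k i + δ))
    (hcomm : ∀ (t : ℕ) ω, (t + 1) % K = 0 →
      X (t + 1) ω = (X t ω - α • Y t ω) + γ • (Xu (t + 1) ω * (W - 1)))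
    (hlocal : ∀ (t : ℕ) ω, (t + 1) % K ≠ 0 →
      X (t + 1) ω = X t ω - α • Y t ω ∧ Xu (t + 1) ω = Xu t ω)
    -- `Q` is an `η`-compression operator, applied columnwise at communication steps:
    -- `X̲ᵗ⁺¹ = X̲ᵗ + Q[Xᵗ⁺¹ᐟ² − X̲ᵗ]`, so `E‖xᵢᵗ⁺¹ᐟ² − x̲ᵢᵗ⁺¹‖² ≤ η² E‖xᵢᵗ⁺¹ᐟ² − x̲ᵢᵗ‖²`
    (hQ : ∀ t : ℕ, (t + 1) % K = 0 → ∀ i : Fin n,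
      ∫ ω, ‖col (X t ω - α • Y t ω - Xu (t + 1) ω) i‖ ^ 2 ∂μ
        ≤ η ^ 2 * ∫ ω, ‖col (X t ω - α • Y t ω - Xu t ω) i‖ ^ 2 ∂μ)
    -- Assumption 3 (stochastic gradients): unbiasedness, independence across agents,
    -- and boundedness
    (hGmeas : ∀ (t : ℕ) (k : Fin d) (i : Fin n), Measurable fun ω => G t ω k i)
    (hXmeas : ∀ (t : ℕ) (k : Fin d) (i : Fin n), Measurable fun ω => X t ω k i)
    (hXumeas : ∀ (t : ℕ) (k : Fin d) (i : Fin n), Measurable fun ω => Xu t ω k i)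
    (hUmeas : ∀ (t : ℤ) (k : Fin d) (i : Fin n), Measurable fun ω => U t ω k i)
    (hXadapt : ∀ (t : ℕ) (k : Fin d) (i : Fin n), Measurable[ℱ t] fun ω => X t ω k i)
    (hUadapt : ∀ (t : ℕ) (k : Fin d) (i : Fin n),
      Measurable[ℱ t] fun ω => U ((t : ℤ) - 1) ω k i)
    (hMadapt : ∀ (t : ℕ) (k : Fin d) (i : Fin n),
      Measurable[ℱ t] fun ω => M ((t : ℤ) - 1) ω k i)
    (hunbias : ∀ (t : ℕ) (i : Fin n),
      μ[fun ω => col (G t ω) i | ℱ t] =ᵐ[μ] fun ω => gradient (f i) (col (X t ω) i))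
    (hindep : ∀ t : ℕ, ProbabilityTheory.iCondIndepFun (ℱ t) (hℱ t)
      (fun i ω => col (G t ω) i) μ)
    (hGB : ∀ (t : ℕ) ω (i : Fin n), ‖col (G t ω) i‖ ≤ B)
    (hGBinf : ∀ (t : ℕ) ω (k : Fin d) (i : Fin n), |G t ω k i| ≤ Binf)
    (hgradB : ∀ (i : Fin n) (x : EuclideanSpace ℝ (Fin d)), ‖gradient (f i) x‖ ≤ B)
    (hgradBinf : ∀ (i : Fin n) (x : EuclideanSpace ℝ (Fin d)) (k : Fin d),
      |gradient (f i) x k| ≤ Binf)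
    -- square integrability of the iterates
    (hXint : ∀ t : ℕ, Integrable (fun ω => frobSq (X t ω)) μ)
    (hXuint : ∀ t : ℕ, Integrable (fun ω => frobSq (Xu t ω)) μ)
    (hγ0 : 0 < γ) (hγle : γ ≤ (1 - ρ) * (1 - η ^ 2) / 100) :
    ∀ r : ℕ, r < T →
      ∫ ω, frobSq (X ((r + 1) * K) ω - Xu ((r + 2) * K) ω) ∂μ
        ≤ 4 * γ ^ 2 * (1 + γ * (1 - ρ) / 16) * (4 / (1 - η ^ 2))
              * ∫ ω, frobSq (X (r * K) ω * (1 - Jmat n)) ∂μ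
          + ((3 + η ^ 2) / 4) * (1 + 8 * γ) * (1 + γ * (1 - ρ) / 16)
              * ∫ ω, frobSq (X (r * K) ω - Xu ((r + 1) * K) ω) ∂μ
          + (3 * (1 + 16 / (γ * (1 - ρ))) + 2 * (1 + 4 / (1 - η ^ 2)))
              * α ^ 2 * K ^ 2 * n * B ^ 2 / δ := by
  intro r hr
  have hρ0 : 0 ≤ ρ := by rw [hρ]; exact norm_nonneg _
  have hρh0 : (0:ℝ) < 1 - ρ := by linarith
  have hρh1 : (1:ℝ) - ρ ≤ 1 := by linarith
  have hu0 : (0:ℝ) ≤ η ^ 2 := sq_nonneg η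
  have hu1 : η ^ 2 < 1 := by nlinarith
  have h1u : (0:ℝ) < 1 - η ^ 2 := by linarith
  -- index facts
  have hK1 : K - 1 + 1 = K := Nat.succ_pred_eq_of_pos hK
  have ht1p1 : r * K + (K - 1) + 1 = (r + 1) * K := by
    have h : r * K + (K - 1) + 1 = r * K + K := by omega
    rw [h]; ring
  have ht2p1 : (r + 1) * K + (K - 1) + 1 = (r + 2) * K := by
    have h : (r + 1) * K + (K - 1) + 1 = (r + 1) * K + K := by omega
    rw [h]; ring
  have hmod1 : (r * K + (K - 1) + 1) % K = 0 := by rw [ht1p1]; exact Nat.mul_mod_left _ _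
  have hmod2 : ((r + 1) * K + (K - 1) + 1) % K = 0 := by rw [ht2p1]; exact Nat.mul_mod_left _ _
  -- local-step recursion
  have steps : ∀ (m j : ℕ), j < K → ∀ ω,
      X (m * K + j) ω = X (m * K) ω - α • (∑ t ∈ Finset.range j, Y (m * K + t) ω)
        ∧ Xu (m * K + j) ω = Xu (m * K) ω := by
    intro m j
    induction j with
    | zero => intro _ ω; simp
    | succ j ih =>
      intro hj ω
      obtain ⟨hXj, hXuj⟩ := ih (by omega) ω
      have hmod : (m * K + j + 1) % K ≠ 0 := by
        have h1 : m * K + j + 1 = (j + 1) + m * K := by ring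
        rw [h1, Nat.add_mul_mod_self_right, Nat.mod_eq_of_lt (by omega)]
        omega
      obtain ⟨hX1, hXu1⟩ := hlocal (m * K + j) ω hmod
      have hidx : m * K + (j + 1) = m * K + j + 1 := by ring
      constructor
      · rw [hidx, hX1, hXj, Finset.sum_range_succ, smul_add]
        abel
      · rw [hidx, hXu1, hXuj]
  have halfX : ∀ (m : ℕ) ω, X (m * K + (K - 1)) ω - α • Y (m * K + (K - 1)) ω
      = X (m * K) ω - α • (∑ t ∈ Finset.range K, Y (m * K + t) ω) := by
    intro m ω
    obtain ⟨hXj, _⟩ := steps m (K - 1) (by omega) ω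
    have hsum : (∑ t ∈ Finset.range K, Y (m * K + t) ω)
        = (∑ t ∈ Finset.range (K - 1), Y (m * K + t) ω) + Y (m * K + (K - 1)) ω := by
      have h := Finset.sum_range_succ (fun t => Y (m * K + t) ω) (K - 1)
      rw [hK1] at h
      exact h
    rw [hXj, hsum, smul_add]
    abel
  have halfXu : ∀ (m : ℕ) ω, Xu (m * K + (K - 1)) ω = Xu (m * K) ω :=
    fun m ω => (steps m (K - 1) (by omega) ω).2
  have hAM : ∀ ω, X (r * K + (K - 1)) ω - α • Y (r * K + (K - 1)) ω
      = X (r * K) ω - α • (∑ t ∈ Finset.range K, Y (r * K + t) ω) := halfX r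
  have hBM : ∀ ω, X ((r + 1) * K + (K - 1)) ω - α • Y ((r + 1) * K + (K - 1)) ω
      = X ((r + 1) * K) ω - α • (∑ t ∈ Finset.range K, Y ((r + 1) * K + t) ω) := halfX (r + 1)
  have hXuT2 : ∀ ω, Xu ((r + 1) * K + (K - 1)) ω = Xu ((r + 1) * K) ω := halfXu (r + 1)
  have hXp : ∀ ω, X ((r + 1) * K) ω
      = (X (r * K + (K - 1)) ω - α • Y (r * K + (K - 1)) ω)
        + γ • (Xu ((r + 1) * K) ω * (W - 1)) := by
    intro ω
    have h := hcomm (r * K + (K - 1)) ω hmod1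
    rwa [ht1p1] at h
  -- bounds on gradients and momenta
  have hGsq : ∀ (t : ℕ) ω (i : Fin n), ∑ k, (G t ω k i) ^ 2 ≤ B ^ 2 := by
    intro t ω i
    calc ∑ k, (G t ω k i) ^ 2 = ‖col (G t ω) i‖ ^ 2 := (colSq_eq _ _).symm
      _ ≤ B ^ 2 := by nlinarith [hGB t ω i, norm_nonneg (col (G t ω) i)]
  have hMB : ∀ (t : ℕ) ω (i : Fin n), ∑ k, (M (t : ℤ) ω k i) ^ 2 ≤ B ^ 2 := by
    intro t
    induction t with
    | zero =>
      intro ω i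
      have h := hMrec 0 ω
      rw [show ((0:ℕ):ℤ) - 1 = -1 by norm_num, hM0 ω, smul_zero, zero_add] at h
      rw [h]
      have he : ∀ k : Fin d, (((1 - β₁) • G 0 ω) k i) ^ 2 = (1 - β₁) ^ 2 * (G 0 ω k i) ^ 2 := by
        intro k; simp [Matrix.smul_apply, mul_pow]
      rw [Finset.sum_congr rfl fun k _ => he k, ← Finset.mul_sum]
      have hb2 : (1 - β₁) ^ 2 ≤ 1 := by nlinarith
      have hs0 : (0:ℝ) ≤ ∑ k, (G 0 ω k i) ^ 2 := Finset.sum_nonneg fun _ _ => sq_nonneg _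
      nlinarith [hGsq 0 ω i, mul_le_mul_of_nonneg_right hb2 hs0]
    | succ t ih =>
      intro ω i
      have h := hMrec (t + 1) ω
      rw [show ((t + 1 : ℕ) : ℤ) - 1 = (t : ℤ) by push_cast; ring] at h
      rw [h]
      have hconv : ∀ k : Fin d, ((β₁ • M (t : ℤ) ω + (1 - β₁) • G (t + 1) ω) k i) ^ 2
          ≤ β₁ * (M (t : ℤ) ω k i) ^ 2 + (1 - β₁) * (G (t + 1) ω k i) ^ 2 := by
        intro k
        simp only [Matrix.add_apply, Matrix.smul_apply, smul_eq_mul]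
        nlinarith [mul_nonneg (mul_nonneg hβ₁0 (show (0:ℝ) ≤ 1 - β₁ by linarith))
          (sq_nonneg (M (t : ℤ) ω k i - G (t + 1) ω k i))]
      calc ∑ k, ((β₁ • M (t : ℤ) ω + (1 - β₁) • G (t + 1) ω) k i) ^ 2
          ≤ ∑ k, (β₁ * (M (t : ℤ) ω k i) ^ 2 + (1 - β₁) * (G (t + 1) ω k i) ^ 2) :=
            Finset.sum_le_sum fun k _ => hconv k
        _ = β₁ * (∑ k, (M (t : ℤ) ω k i) ^ 2) + (1 - β₁) * (∑ k, (G (t + 1) ω k i) ^ 2) := by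
            rw [Finset.sum_add_distrib, Finset.mul_sum, Finset.mul_sum]
        _ ≤ β₁ * B ^ 2 + (1 - β₁) * B ^ 2 :=
            add_le_add (mul_le_mul_of_nonneg_left (ih ω i) hβ₁0)
              (mul_le_mul_of_nonneg_left (hGsq (t + 1) ω i) (by linarith))
        _ = B ^ 2 := by ring
  have hYB : ∀ (t : ℕ) ω, frobSq (Y t ω) ≤ (n : ℝ) * B ^ 2 / δ := by
    intro t ω
    rw [hY t ω]
    have hent : ∀ (k : Fin d) (i : Fin n),
        ((Matrix.of fun k i => M (t : ℤ) ω k i / Real.sqrt (U ((t : ℤ) - 1) ω k i + δ)) k i) ^ 2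
          ≤ (M (t : ℤ) ω k i) ^ 2 / δ := by
      intro k i
      have hU := hUpos ((t : ℤ) - 1) ω k i
      simp only [Matrix.of_apply]
      rw [div_pow, Real.sq_sqrt (by linarith : 0 ≤ U ((t : ℤ) - 1) ω k i + δ)]
      exact div_le_div_of_nonneg_left (sq_nonneg _) hδ (by linarith)
    calc frobSq _ ≤ ∑ k, ∑ i, (M (t : ℤ) ω k i) ^ 2 / δ :=
          Finset.sum_le_sum fun k _ => Finset.sum_le_sum fun i _ => hent k i
      _ = (∑ i, ∑ k, (M (t : ℤ) ω k i) ^ 2) / δ := by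
          rw [Finset.sum_comm]
          simp only [← Finset.sum_div]
      _ ≤ (∑ _i : Fin n, B ^ 2) / δ := by
          gcongr with i _
          exact hMB t ω i
      _ = (n : ℝ) * B ^ 2 / δ := by rw [Finset.sum_const, Finset.card_univ, Fintype.card_fin,
          nsmul_eq_mul]
  have hSB : ∀ (c : ℕ) ω, frobSq (α • (∑ t ∈ Finset.range K, Y (c + t) ω))
      ≤ α ^ 2 * (K : ℝ) ^ 2 * (n : ℝ) * B ^ 2 / δ := by
    intro c ω
    rw [frobSq_smul]
    have h1 := frobSq_sum_le K (fun t => Y (c + t) ω)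
    have h2 : ∑ t ∈ Finset.range K, frobSq (Y (c + t) ω) ≤ (K : ℝ) * ((n : ℝ) * B ^ 2 / δ) := by
      calc ∑ t ∈ Finset.range K, frobSq (Y (c + t) ω)
          ≤ ∑ _t ∈ Finset.range K, ((n : ℝ) * B ^ 2 / δ) :=
            Finset.sum_le_sum fun t _ => hYB (c + t) ω
        _ = (K : ℝ) * ((n : ℝ) * B ^ 2 / δ) := by
            rw [Finset.sum_const, Finset.card_range, nsmul_eq_mul]
    have h3 : frobSq (∑ t ∈ Finset.range K, Y (c + t) ω)
        ≤ (K : ℝ) * ((K : ℝ) * ((n : ℝ) * B ^ 2 / δ)) :=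
      le_trans h1 (mul_le_mul_of_nonneg_left h2 (Nat.cast_nonneg K))
    calc α ^ 2 * frobSq (∑ t ∈ Finset.range K, Y (c + t) ω)
        ≤ α ^ 2 * ((K : ℝ) * ((K : ℝ) * ((n : ℝ) * B ^ 2 / δ))) :=
          mul_le_mul_of_nonneg_left h3 (sq_nonneg α)
      _ = α ^ 2 * (K : ℝ) ^ 2 * (n : ℝ) * B ^ 2 / δ := by ring
  have hNV0 : (0:ℝ) ≤ α ^ 2 * (K : ℝ) ^ 2 * (n : ℝ) * B ^ 2 / δ := by positivity
  -- measurability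
  have hMmeas : ∀ (t : ℕ) (k : Fin d) (i : Fin n), Measurable fun ω => M (t : ℤ) ω k i := by
    intro t
    induction t with
    | zero =>
      intro k i
      have he : (fun ω => M ((0:ℕ) : ℤ) ω k i) = fun ω => (1 - β₁) * G 0 ω k i := by
        funext ω
        rw [hMrec 0 ω, show ((0:ℕ):ℤ) - 1 = -1 by norm_num, hM0 ω, smul_zero, zero_add]
        simp [Matrix.smul_apply]
      rw [he]
      exact (hGmeas 0 k i).const_mul _
    | succ t ih =>
      intro k i
      have he : (fun ω => M ((t + 1 : ℕ) : ℤ) ω k i)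
          = fun ω => β₁ * M (t : ℤ) ω k i + (1 - β₁) * G (t + 1) ω k i := by
        funext ω
        rw [hMrec (t + 1) ω, show ((t + 1 : ℕ) : ℤ) - 1 = (t : ℤ) by push_cast; ring]
        simp [Matrix.add_apply, Matrix.smul_apply]
      rw [he]
      exact ((ih k i).const_mul _).add ((hGmeas (t + 1) k i).const_mul _)
  have hYmeas : ∀ (t : ℕ) (k : Fin d) (i : Fin n), Measurable fun ω => Y t ω k i := by
    intro t k i
    have he : (fun ω => Y t ω k i)
        = fun ω => M (t : ℤ) ω k i / Real.sqrt (U ((t : ℤ) - 1) ω k i + δ) := by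
      funext ω; rw [hY t ω]; rfl
    rw [he]
    exact (hMmeas t k i).div
      (Real.continuous_sqrt.measurable.comp ((hUmeas ((t : ℤ) - 1) k i).add_const δ))
  have hXYm : ∀ (t : ℕ) (k : Fin d) (i : Fin n),
      Measurable fun ω => (X t ω - α • Y t ω) k i := by
    intro t k i
    have he : (fun ω => (X t ω - α • Y t ω) k i) = fun ω => X t ω k i - α * Y t ω k i := by
      funext ω; simp [Matrix.sub_apply, Matrix.smul_apply]
    rw [he]
    exact (hXmeas t k i).sub ((hYmeas t k i).const_mul α)
  have hsubm : ∀ {P Q : Ω → Matrix (Fin d) (Fin n) ℝ},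
      (∀ k i, Measurable fun ω => P ω k i) → (∀ k i, Measurable fun ω => Q ω k i) →
      (∀ (k : Fin d) (i : Fin n), Measurable fun ω => (P ω - Q ω) k i) := by
    intro P Q hP hQ' k i
    have he : (fun ω => (P ω - Q ω) k i) = fun ω => P ω k i - Q ω k i := by
      funext ω; simp [Matrix.sub_apply]
    rw [he]
    exact (hP k i).sub (hQ' k i)
  have hmulm : ∀ {P : Ω → Matrix (Fin d) (Fin n) ℝ} (C : Matrix (Fin n) (Fin n) ℝ),
      (∀ k i, Measurable fun ω => P ω k i) →
      (∀ (k : Fin d) (i : Fin n), Measurable fun ω => (P ω * C) k i) := by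
    intro P C hP k i
    have he : (fun ω => (P ω * C) k i) = fun ω => ∑ j, P ω k j * C j i := by
      funext ω; rw [Matrix.mul_apply]
    rw [he]
    exact Finset.measurable_sum _ fun j _ => (hP k j).mul_const _
  -- integrability
  have hdomYS : ∀ (t : ℕ) ω, frobSq (X t ω - α • Y t ω)
      ≤ 2 * frobSq (X t ω) + 2 * (α ^ 2 * ((n : ℝ) * B ^ 2 / δ)) := by
    intro t ω
    have h1 := frobSq_sub_le (X t ω) (α • Y t ω)
    have h2 : frobSq (α • Y t ω) ≤ α ^ 2 * ((n : ℝ) * B ^ 2 / δ) := by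
      rw [frobSq_smul]
      exact mul_le_mul_of_nonneg_left (hYB t ω) (sq_nonneg α)
    linarith
  have hIXY : ∀ t : ℕ, Integrable (fun ω => frobSq (X t ω - α • Y t ω)) μ := by
    intro t
    refine integrable_of_bound μ (measurable_frobSq (hXYm t)) (fun ω => frobSq_nonneg _)
      (hdomYS t) (((hXint t).const_mul 2).add (integrable_const _))
  have hIsub : ∀ (P Q : Ω → Matrix (Fin d) (Fin n) ℝ),
      (∀ k i, Measurable fun ω => P ω k i) → (∀ k i, Measurable fun ω => Q ω k i) →
      Integrable (fun ω => frobSq (P ω)) μ → Integrable (fun ω => frobSq (Q ω)) μ →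
      Integrable (fun ω => frobSq (P ω - Q ω)) μ := by
    intro P Q hPm hQm hPI hQI
    exact integrable_of_bound μ (measurable_frobSq (hsubm hPm hQm))
      (fun ω => frobSq_nonneg _) (fun ω => frobSq_sub_le _ _)
      ((hPI.const_mul 2).add (hQI.const_mul 2))
  have hI1 : Integrable (fun ω => frobSq (X ((r + 1) * K + (K - 1)) ω
      - α • Y ((r + 1) * K + (K - 1)) ω - Xu ((r + 2) * K) ω)) μ :=
    hIsub _ _ (hXYm _) (hXumeas _) (hIXY _) (hXuint _)
  have hI2 : Integrable (fun ω => frobSq (X ((r + 1) * K + (K - 1)) ω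
      - α • Y ((r + 1) * K + (K - 1)) ω - Xu ((r + 1) * K) ω)) μ :=
    hIsub _ _ (hXYm _) (hXumeas _) (hIXY _) (hXuint _)
  have hI3 : Integrable (fun ω => frobSq (X ((r + 1) * K) ω - Xu ((r + 1) * K) ω)) μ :=
    hIsub _ _ (hXmeas _) (hXumeas _) (hXint _) (hXuint _)
  have hI4 : Integrable (fun ω => frobSq (X (r * K + (K - 1)) ω
      - α • Y (r * K + (K - 1)) ω - Xu ((r + 1) * K) ω)) μ :=
    hIsub _ _ (hXYm _) (hXumeas _) (hIXY _) (hXuint _)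
  have hI5 : Integrable (fun ω => frobSq ((X (r * K + (K - 1)) ω
      - α • Y (r * K + (K - 1)) ω) * ((1 : Matrix (Fin n) (Fin n) ℝ) - Jmat n))) μ :=
    integrable_of_bound μ (measurable_frobSq (hmulm _ (hXYm _)))
      (fun ω => frobSq_nonneg _) (fun ω => frobSq_mulprojJ_le hn _) (hIXY _)
  have hI6 : Integrable (fun ω => frobSq (X (r * K) ω - Xu ((r + 1) * K) ω)) μ :=
    hIsub _ _ (hXmeas _) (hXumeas _) (hXint _) (hXuint _)
  have hI7 : Integrable (fun ω => frobSq (X (r * K) ω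
      * ((1 : Matrix (Fin n) (Fin n) ℝ) - Jmat n))) μ :=
    integrable_of_bound μ (measurable_frobSq (hmulm _ (hXmeas _)))
      (fun ω => frobSq_nonneg _) (fun ω => frobSq_mulprojJ_le hn _) (hXint _)
  have hIc1 : ∀ i : Fin n, Integrable (fun ω => ‖col (X ((r + 1) * K + (K - 1)) ω
      - α • Y ((r + 1) * K + (K - 1)) ω - Xu ((r + 2) * K) ω) i‖ ^ 2) μ := by
    intro i
    exact integrable_of_bound μ (measurable_colSq (hsubm (hXYm _) (hXumeas _)) i)
      (fun ω => sq_nonneg _) (fun ω => col_sq_le_frobSq _ i) hI1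
  have hIc2 : ∀ i : Fin n, Integrable (fun ω => ‖col (X ((r + 1) * K + (K - 1)) ω
      - α • Y ((r + 1) * K + (K - 1)) ω - Xu ((r + 1) * K) ω) i‖ ^ 2) μ := by
    intro i
    exact integrable_of_bound μ (measurable_colSq (hsubm (hXYm _) (hXumeas _)) i)
      (fun ω => sq_nonneg _) (fun ω => col_sq_le_frobSq _ i) hI2
  -- Step 0
  have S0 : ∫ ω, frobSq (X ((r + 1) * K) ω - Xu ((r + 2) * K) ω) ∂μ
      ≤ (1 + γ * (1 - ρ) / 16) * ∫ ω, frobSq (X ((r + 1) * K + (K - 1)) ω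
          - α • Y ((r + 1) * K + (K - 1)) ω - Xu ((r + 2) * K) ω) ∂μ
        + (1 + 16 / (γ * (1 - ρ))) * (α ^ 2 * (K : ℝ) ^ 2 * (n : ℝ) * B ^ 2 / δ) := by
    refine step_bound μ hI1 ?_
    intro ω
    have hidd : X ((r + 1) * K) ω - Xu ((r + 2) * K) ω
        = (X ((r + 1) * K + (K - 1)) ω - α • Y ((r + 1) * K + (K - 1)) ω - Xu ((r + 2) * K) ω)
          + α • (∑ t ∈ Finset.range K, Y ((r + 1) * K + t) ω) := by
      rw [hBM ω]; abel
    rw [hidd]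
    have hy := frobSq_young (show (0:ℝ) < γ * (1 - ρ) / 16 by positivity)
      (X ((r + 1) * K + (K - 1)) ω - α • Y ((r + 1) * K + (K - 1)) ω - Xu ((r + 2) * K) ω)
      (α • (∑ t ∈ Finset.range K, Y ((r + 1) * K + t) ω))
    have hce : 1 + 1 / (γ * (1 - ρ) / 16) = 1 + 16 / (γ * (1 - ρ)) := by rw [one_div_div]
    rw [hce] at hy
    have hs := hSB ((r + 1) * K) ω
    have hco : (0:ℝ) ≤ 1 + 16 / (γ * (1 - ρ)) := by positivity
    nlinarith [mul_le_mul_of_nonneg_left hs hco]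
  -- Step 1 (compression)
  have S1 : ∫ ω, frobSq (X ((r + 1) * K + (K - 1)) ω
        - α • Y ((r + 1) * K + (K - 1)) ω - Xu ((r + 2) * K) ω) ∂μ
      ≤ η ^ 2 * ∫ ω, frobSq (X ((r + 1) * K + (K - 1)) ω
        - α • Y ((r + 1) * K + (K - 1)) ω - Xu ((r + 1) * K) ω) ∂μ := by
    have hQ2 : ∀ i : Fin n,
        ∫ ω, ‖col (X ((r + 1) * K + (K - 1)) ω - α • Y ((r + 1) * K + (K - 1)) ω
            - Xu ((r + 2) * K) ω) i‖ ^ 2 ∂μ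
          ≤ η ^ 2 * ∫ ω, ‖col (X ((r + 1) * K + (K - 1)) ω - α • Y ((r + 1) * K + (K - 1)) ω
            - Xu ((r + 1) * K) ω) i‖ ^ 2 ∂μ := by
      intro i
      have h := hQ ((r + 1) * K + (K - 1)) hmod2 i
      simp only [ht2p1, hXuT2] at h
      exact h
    calc ∫ ω, frobSq (X ((r + 1) * K + (K - 1)) ω - α • Y ((r + 1) * K + (K - 1)) ω
            - Xu ((r + 2) * K) ω) ∂μ
        = ∫ ω, ∑ i, ‖col (X ((r + 1) * K + (K - 1)) ω - α • Y ((r + 1) * K + (K - 1)) ω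
            - Xu ((r + 2) * K) ω) i‖ ^ 2 ∂μ := by
          refine integral_congr_ae (ae_of_all _ fun ω => ?_)
          simp only [frobSq_col_eq]
      _ = ∑ i, ∫ ω, ‖col (X ((r + 1) * K + (K - 1)) ω - α • Y ((r + 1) * K + (K - 1)) ω
            - Xu ((r + 2) * K) ω) i‖ ^ 2 ∂μ := integral_finset_sum _ (fun i _ => hIc1 i)
      _ ≤ ∑ i, η ^ 2 * ∫ ω, ‖col (X ((r + 1) * K + (K - 1)) ω
            - α • Y ((r + 1) * K + (K - 1)) ω - Xu ((r + 1) * K) ω) i‖ ^ 2 ∂μ :=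
          Finset.sum_le_sum fun i _ => hQ2 i
      _ = η ^ 2 * ∑ i, ∫ ω, ‖col (X ((r + 1) * K + (K - 1)) ω
            - α • Y ((r + 1) * K + (K - 1)) ω - Xu ((r + 1) * K) ω) i‖ ^ 2 ∂μ := by
          rw [Finset.mul_sum]
      _ = η ^ 2 * ∫ ω, frobSq (X ((r + 1) * K + (K - 1)) ω
            - α • Y ((r + 1) * K + (K - 1)) ω - Xu ((r + 1) * K) ω) ∂μ := by
          rw [← integral_finset_sum _ (fun i _ => hIc2 i)]
          refine congrArg _ (integral_congr_ae (ae_of_all _ fun ω => ?_))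
          simp only [frobSq_col_eq]
  -- Step 2
  have S2 : ∫ ω, frobSq (X ((r + 1) * K + (K - 1)) ω
        - α • Y ((r + 1) * K + (K - 1)) ω - Xu ((r + 1) * K) ω) ∂μ
      ≤ (1 + γ) * ∫ ω, frobSq (X ((r + 1) * K) ω - Xu ((r + 1) * K) ω) ∂μ
        + (1 + 1 / γ) * (α ^ 2 * (K : ℝ) ^ 2 * (n : ℝ) * B ^ 2 / δ) := by
    refine step_bound μ hI3 ?_
    intro ω
    have hidd : X ((r + 1) * K + (K - 1)) ω - α • Y ((r + 1) * K + (K - 1)) ω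
          - Xu ((r + 1) * K) ω
        = (X ((r + 1) * K) ω - Xu ((r + 1) * K) ω)
          + -(α • (∑ t ∈ Finset.range K, Y ((r + 1) * K + t) ω)) := by
      rw [hBM ω]; abel
    rw [hidd]
    have hy := frobSq_young hγ0 (X ((r + 1) * K) ω - Xu ((r + 1) * K) ω)
      (-(α • (∑ t ∈ Finset.range K, Y ((r + 1) * K + t) ω)))
    rw [frobSq_neg] at hy
    have hs := hSB ((r + 1) * K) ω
    have hco : (0:ℝ) ≤ 1 + 1 / γ := by positivity
    nlinarith [mul_le_mul_of_nonneg_left hs hco]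
  -- Step 3 (mixing step)
  have S3 : ∫ ω, frobSq (X ((r + 1) * K) ω - Xu ((r + 1) * K) ω) ∂μ
      ≤ ((4 - η ^ 2) / 3) * (1 + 2 * γ) ^ 2 * ∫ ω, frobSq (X (r * K + (K - 1)) ω
          - α • Y (r * K + (K - 1)) ω - Xu ((r + 1) * K) ω) ∂μ
        + (1 + 3 / (1 - η ^ 2)) * (4 * γ ^ 2) * ∫ ω, frobSq ((X (r * K + (K - 1)) ω
          - α • Y (r * K + (K - 1)) ω) * ((1 : Matrix (Fin n) (Fin n) ℝ) - Jmat n)) ∂μ := by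
    refine step_bound2 μ hI4 hI5 ?_
    intro ω
    have hid : X ((r + 1) * K) ω - Xu ((r + 1) * K) ω
        = ((X (r * K + (K - 1)) ω - α • Y (r * K + (K - 1)) ω - Xu ((r + 1) * K) ω)
            + (-γ) • ((X (r * K + (K - 1)) ω - α • Y (r * K + (K - 1)) ω
              - Xu ((r + 1) * K) ω) * (W - 1)))
          + γ • ((X (r * K + (K - 1)) ω - α • Y (r * K + (K - 1)) ω) * (W - 1)) := by
      rw [hXp ω, Matrix.sub_mul]
      simp only [smul_sub, neg_smul]
      abel
    rw [hid]
    have hc3 : (0:ℝ) < (1 - η ^ 2) / 3 := by linarith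
    have hy1 := frobSq_young hc3
      ((X (r * K + (K - 1)) ω - α • Y (r * K + (K - 1)) ω - Xu ((r + 1) * K) ω)
        + (-γ) • ((X (r * K + (K - 1)) ω - α • Y (r * K + (K - 1)) ω
          - Xu ((r + 1) * K) ω) * (W - 1)))
      (γ • ((X (r * K + (K - 1)) ω - α • Y (r * K + (K - 1)) ω) * (W - 1)))
    have hy2 := frobSq_young (show (0:ℝ) < 2 * γ by linarith)
      (X (r * K + (K - 1)) ω - α • Y (r * K + (K - 1)) ω - Xu ((r + 1) * K) ω)
      ((-γ) • ((X (r * K + (K - 1)) ω - α • Y (r * K + (K - 1)) ω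
        - Xu ((r + 1) * K) ω) * (W - 1)))
    have hw1 : frobSq ((-γ) • ((X (r * K + (K - 1)) ω - α • Y (r * K + (K - 1)) ω
          - Xu ((r + 1) * K) ω) * (W - 1)))
        = γ ^ 2 * frobSq ((X (r * K + (K - 1)) ω - α • Y (r * K + (K - 1)) ω
          - Xu ((r + 1) * K) ω) * (W - 1)) := by
      rw [frobSq_smul, neg_pow]
      ring
    have hw2 := frobSq_mulWsub_le hWpos hWrow hWcol
      (X (r * K + (K - 1)) ω - α • Y (r * K + (K - 1)) ω - Xu ((r + 1) * K) ω)
    have hFnn := frobSq_nonneg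
      (X (r * K + (K - 1)) ω - α • Y (r * K + (K - 1)) ω - Xu ((r + 1) * K) ω)
    have hinner : frobSq ((X (r * K + (K - 1)) ω - α • Y (r * K + (K - 1)) ω
          - Xu ((r + 1) * K) ω)
          + (-γ) • ((X (r * K + (K - 1)) ω - α • Y (r * K + (K - 1)) ω
            - Xu ((r + 1) * K) ω) * (W - 1)))
        ≤ (1 + 2 * γ) ^ 2 * frobSq (X (r * K + (K - 1)) ω - α • Y (r * K + (K - 1)) ω
          - Xu ((r + 1) * K) ω) := by
      rw [hw1] at hy2
      have hpos : (0:ℝ) ≤ 1 + 1 / (2 * γ) := by positivity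
      have h4 := mul_le_mul_of_nonneg_left hw2 (sq_nonneg γ)
      have h5 := mul_le_mul_of_nonneg_left h4 hpos
      have hfe : (1 + 1 / (2 * γ)) * (γ ^ 2 * (4 * frobSq (X (r * K + (K - 1)) ω
            - α • Y (r * K + (K - 1)) ω - Xu ((r + 1) * K) ω)))
          = (4 * γ ^ 2 + 2 * γ) * frobSq (X (r * K + (K - 1)) ω
            - α • Y (r * K + (K - 1)) ω - Xu ((r + 1) * K) ω) := by
        field_simp
        ring
      nlinarith [hy2, h5, hfe]
    have houter2 : frobSq (γ • ((X (r * K + (K - 1)) ω - α • Y (r * K + (K - 1)) ω) * (W - 1)))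
        ≤ γ ^ 2 * (4 * frobSq ((X (r * K + (K - 1)) ω - α • Y (r * K + (K - 1)) ω)
          * ((1 : Matrix (Fin n) (Fin n) ℝ) - Jmat n))) := by
      rw [frobSq_smul, mulWsub_eq_proj _ hn hWcol]
      exact mul_le_mul_of_nonneg_left
        (frobSq_mulWsub_le hWpos hWrow hWcol _) (sq_nonneg γ)
    have hnn1 : (0:ℝ) ≤ 1 + (1 - η ^ 2) / 3 := by linarith
    have hnn2 : (0:ℝ) ≤ 1 + 1 / ((1 - η ^ 2) / 3) := by positivity
    have h2c3 : 1 + 1 / ((1 - η ^ 2) / 3) = 1 + 3 / (1 - η ^ 2) := by rw [one_div_div]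
    have hstep := le_trans hy1 (add_le_add (mul_le_mul_of_nonneg_left hinner hnn1)
      (mul_le_mul_of_nonneg_left houter2 hnn2))
    rw [h2c3] at hstep
    have hfin : (1 + (1 - η ^ 2) / 3) * ((1 + 2 * γ) ^ 2 * frobSq (X (r * K + (K - 1)) ω
          - α • Y (r * K + (K - 1)) ω - Xu ((r + 1) * K) ω))
          + (1 + 3 / (1 - η ^ 2)) * (γ ^ 2 * (4 * frobSq ((X (r * K + (K - 1)) ω
            - α • Y (r * K + (K - 1)) ω) * ((1 : Matrix (Fin n) (Fin n) ℝ) - Jmat n))))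
        = ((4 - η ^ 2) / 3) * (1 + 2 * γ) ^ 2 * frobSq (X (r * K + (K - 1)) ω
            - α • Y (r * K + (K - 1)) ω - Xu ((r + 1) * K) ω)
          + (1 + 3 / (1 - η ^ 2)) * (4 * γ ^ 2) * frobSq ((X (r * K + (K - 1)) ω
            - α • Y (r * K + (K - 1)) ω) * ((1 : Matrix (Fin n) (Fin n) ℝ) - Jmat n)) := by
      ring
    linarith [hstep, hfin.symm.le, hfin.le]
  -- Step 4
  have S4 : ∫ ω, frobSq (X (r * K + (K - 1)) ω - α • Y (r * K + (K - 1)) ω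
        - Xu ((r + 1) * K) ω) ∂μ
      ≤ (1 + γ) * ∫ ω, frobSq (X (r * K) ω - Xu ((r + 1) * K) ω) ∂μ
        + (1 + 1 / γ) * (α ^ 2 * (K : ℝ) ^ 2 * (n : ℝ) * B ^ 2 / δ) := by
    refine step_bound μ hI6 ?_
    intro ω
    have hidd : X (r * K + (K - 1)) ω - α • Y (r * K + (K - 1)) ω - Xu ((r + 1) * K) ω
        = (X (r * K) ω - Xu ((r + 1) * K) ω)
          + -(α • (∑ t ∈ Finset.range K, Y (r * K + t) ω)) := by
      rw [hAM ω]; abel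
    rw [hidd]
    have hy := frobSq_young hγ0 (X (r * K) ω - Xu ((r + 1) * K) ω)
      (-(α • (∑ t ∈ Finset.range K, Y (r * K + t) ω)))
    rw [frobSq_neg] at hy
    have hs := hSB (r * K) ω
    have hco : (0:ℝ) ≤ 1 + 1 / γ := by positivity
    nlinarith [mul_le_mul_of_nonneg_left hs hco]
  -- Step 5
  have S5 : ∫ ω, frobSq ((X (r * K + (K - 1)) ω - α • Y (r * K + (K - 1)) ω)
        * ((1 : Matrix (Fin n) (Fin n) ℝ) - Jmat n)) ∂μ
      ≤ (5 / 4) * ∫ ω, frobSq (X (r * K) ω * ((1 : Matrix (Fin n) (Fin n) ℝ) - Jmat n)) ∂μ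
        + 5 * (α ^ 2 * (K : ℝ) ^ 2 * (n : ℝ) * B ^ 2 / δ) := by
    refine step_bound μ hI7 ?_
    intro ω
    have hidd : (X (r * K + (K - 1)) ω - α • Y (r * K + (K - 1)) ω)
          * ((1 : Matrix (Fin n) (Fin n) ℝ) - Jmat n)
        = X (r * K) ω * ((1 : Matrix (Fin n) (Fin n) ℝ) - Jmat n)
          + -((α • (∑ t ∈ Finset.range K, Y (r * K + t) ω))
            * ((1 : Matrix (Fin n) (Fin n) ℝ) - Jmat n)) := by
      rw [hAM ω, Matrix.sub_mul]
      abel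
    rw [hidd]
    have hy := frobSq_young (show (0:ℝ) < 1/4 by norm_num)
      (X (r * K) ω * ((1 : Matrix (Fin n) (Fin n) ℝ) - Jmat n))
      (-((α • (∑ t ∈ Finset.range K, Y (r * K + t) ω))
        * ((1 : Matrix (Fin n) (Fin n) ℝ) - Jmat n)))
    rw [frobSq_neg] at hy
    have hs : frobSq ((α • (∑ t ∈ Finset.range K, Y (r * K + t) ω))
          * ((1 : Matrix (Fin n) (Fin n) ℝ) - Jmat n))
        ≤ α ^ 2 * (K : ℝ) ^ 2 * (n : ℝ) * B ^ 2 / δ :=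
      le_trans (frobSq_mulprojJ_le hn _) (hSB (r * K) ω)
    have hq1 : (1:ℝ) + 1/4 = 5/4 := by norm_num
    have hq2 : (1:ℝ) + 1/(1/4) = 5 := by norm_num
    rw [hq1, hq2] at hy
    nlinarith [hs]
  -- final assembly
  have hE6nn : 0 ≤ ∫ ω, frobSq (X (r * K) ω - Xu ((r + 1) * K) ω) ∂μ :=
    integral_nonneg fun ω => frobSq_nonneg _
  have hE7nn : 0 ≤ ∫ ω, frobSq (X (r * K) ω * ((1 : Matrix (Fin n) (Fin n) ℝ) - Jmat n)) ∂μ :=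
    integral_nonneg fun ω => frobSq_nonneg _
  have final := final_combine (η ^ 2) γ (1 - ρ) (α ^ 2 * (K : ℝ) ^ 2 * (n : ℝ) * B ^ 2 / δ)
    (∫ ω, frobSq (X ((r + 1) * K) ω - Xu ((r + 2) * K) ω) ∂μ)
    (∫ ω, frobSq (X ((r + 1) * K + (K - 1)) ω - α • Y ((r + 1) * K + (K - 1)) ω
      - Xu ((r + 2) * K) ω) ∂μ)
    (∫ ω, frobSq (X ((r + 1) * K + (K - 1)) ω - α • Y ((r + 1) * K + (K - 1)) ω
      - Xu ((r + 1) * K) ω) ∂μ)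
    (∫ ω, frobSq (X ((r + 1) * K) ω - Xu ((r + 1) * K) ω) ∂μ)
    (∫ ω, frobSq (X (r * K + (K - 1)) ω - α • Y (r * K + (K - 1)) ω - Xu ((r + 1) * K) ω) ∂μ)
    (∫ ω, frobSq ((X (r * K + (K - 1)) ω - α • Y (r * K + (K - 1)) ω)
      * ((1 : Matrix (Fin n) (Fin n) ℝ) - Jmat n)) ∂μ)
    (∫ ω, frobSq (X (r * K) ω - Xu ((r + 1) * K) ω) ∂μ)
    (∫ ω, frobSq (X (r * K) ω * ((1 : Matrix (Fin n) (Fin n) ℝ) - Jmat n)) ∂μ)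
    hu0 hu1 hρh0 hρh1 hγ0 hγle hNV0 hE6nn hE7nn S0 S1 S2 S3 S4 S5
  exact le_trans final (le_of_eq (by ring))
end
end

section
/- For the AMSGrad second-momentum update with û_i^t = β₂·û_i^{t−1} + (1−β₂)·g_i^t ∘ g_i^t, û_i^{−1} = 0, u_i^t = max{u_i^{t−1}, û_i^t} componentwise, u_i^{−1} = u_i^{−2} = 0, and β₂ ∈ (0,1], if ‖g_i^t‖_∞ ≤ B_∞ for all i and t, then ‖u_i^t‖_∞ ≤ B_∞² for all t ≥ 0 and i ∈ {1,…,n}, and ∑_{t=0}^{TK−1} (1/n)·∑_{i=1}^n ‖1/√(u_i^{t−2}+δ) − 1/√(u_i^{t−1}+δ)‖² ≤ d/δ. -/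
open MeasureTheory Finset Real
open scoped RealInnerProductSpace

noncomputable section

lemma telescope_sq (N : ℕ) (b : ℕ → ℝ) (hmono : ∀ t, b (t+1) ≤ b t) (hnn : ∀ t, 0 ≤ b t) :
    ∑ t ∈ Finset.range N, (b t - b (t+1))^2 ≤ (b 0)^2 := by
  have hanti : Antitone b := antitone_nat_of_succ_le hmono
  calc ∑ t ∈ Finset.range N, (b t - b (t+1))^2
      ≤ ∑ t ∈ Finset.range N, b 0 * (b t - b (t+1)) := by
        apply Finset.sum_le_sum
        intro t _
        have h1 : b (t+1) ≤ b t := hmono t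
        have h2 : b t ≤ b 0 := hanti (Nat.zero_le t)
        nlinarith [hnn (t+1)]
    _ = b 0 * (b 0 - b N) := by rw [← Finset.mul_sum, Finset.sum_range_sub']
    _ ≤ (b 0)^2 := by nlinarith [hnn N, hnn 0]


/-- AMSGrad second momenta. If `‖gᵢᵗ‖_∞ ≤ B_∞`, then the AMSGrad second
momenta satisfy `‖uᵢᵗ‖_∞ ≤ B_∞²` for all `t ≥ 0`, and
`∑_{t=0}^{TK−1} (1/n) ∑ᵢ ‖1/√(uᵢ^{t−2}+δ) − 1/√(uᵢ^{t−1}+δ)‖² ≤ d/δ`. -/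
theorem stmt10 (d n T K : ℕ) (hn : 0 < n) (hT : 0 < T) (hK : 0 < K)
    (δ β₂ Binf : ℝ) (hδ : 0 < δ) (hβ₂0 : 0 < β₂) (hβ₂1 : β₂ ≤ 1) (hBinf : 0 < Binf)
    (g : Fin n → ℕ → EuclideanSpace ℝ (Fin d))
    (hg : ∀ (i : Fin n) (t : ℕ) (k : Fin d), |g i t k| ≤ Binf)
    (uhat u : Fin n → ℤ → EuclideanSpace ℝ (Fin d))
    (huhat0 : ∀ i, uhat i (-1) = 0)
    (huhat : ∀ (i : Fin n) (t : ℕ),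
      uhat i (t : ℤ) = β₂ • uhat i ((t : ℤ) - 1) + (1 - β₂) • odot (g i t) (g i t))
    (hu1 : ∀ i, u i (-1) = 0) (hu2 : ∀ i, u i (-2) = 0)
    (hu : ∀ (i : Fin n) (t : ℕ) (k : Fin d),
      u i (t : ℤ) k = max (u i ((t : ℤ) - 1) k) (uhat i (t : ℤ) k)) :
    (∀ (t : ℕ) (i : Fin n) (k : Fin d), |u i (t : ℤ) k| ≤ Binf ^ 2) ∧
    ∑ t ∈ Finset.range (T * K),
        (1 / (n : ℝ)) * ∑ i, ‖invSq (u i ((t : ℤ) - 2)) δ - invSq (u i ((t : ℤ) - 1)) δ‖ ^ 2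
      ≤ d / δ := by
  -- squared gradients bounded
  have hg2 : ∀ (i : Fin n) (t : ℕ) (k : Fin d),
      0 ≤ (g i t k)^2 ∧ (g i t k)^2 ≤ Binf^2 := by
    intro i t k
    refine ⟨sq_nonneg _, ?_⟩
    calc (g i t k)^2 = |g i t k|^2 := (sq_abs _).symm
      _ ≤ Binf^2 := pow_le_pow_left₀ (abs_nonneg _) (hg i t k) 2
  -- uhat bounds
  have huhatb : ∀ (i : Fin n) (t : ℕ) (k : Fin d),
      0 ≤ uhat i (t : ℤ) k ∧ uhat i (t : ℤ) k ≤ Binf^2 := by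
    intro i t k
    induction t with
    | zero =>
      have h := congrFun (congrArg WithLp.ofLp (huhat i 0)) k
      simp only [Nat.cast_zero, zero_sub, huhat0, PiLp.add_apply, PiLp.smul_apply,
        PiLp.zero_apply, smul_eq_mul, mul_zero, zero_add, odot, PiLp.toLp_apply] at h
      obtain ⟨h1, h2⟩ := hg2 i 0 k
      constructor
      · push_cast; rw [h]; nlinarith
      · push_cast; rw [h]; nlinarith
    | succ t ih =>
      have h := congrFun (congrArg WithLp.ofLp (huhat i (t+1))) k
      have hc : ((t:ℕ)+1 : ℤ) - 1 = (t : ℤ) := by ring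
      push_cast at h
      rw [hc] at h
      simp only [PiLp.add_apply, PiLp.smul_apply, smul_eq_mul, odot, PiLp.toLp_apply] at h
      obtain ⟨h1, h2⟩ := hg2 i (t+1) k
      obtain ⟨ih1, ih2⟩ := ih
      constructor
      · push_cast; rw [h]; nlinarith
      · push_cast; rw [h]; nlinarith
  -- u bounds
  have hub : ∀ (t : ℕ) (i : Fin n) (k : Fin d),
      0 ≤ u i (t : ℤ) k ∧ u i (t : ℤ) k ≤ Binf^2 := by
    intro t i k
    induction t with
    | zero =>
      have h := hu i 0 k
      simp only [Nat.cast_zero, zero_sub, hu1, PiLp.zero_apply] at h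
      obtain ⟨h1, h2⟩ := huhatb i 0 k
      push_cast at h1 h2 ⊢
      rw [h]
      exact ⟨le_max_left 0 _, max_le (by positivity) h2⟩
    | succ t ih =>
      have h := hu i (t+1) k
      have hc : (((t:ℕ)+1 : ℕ) : ℤ) - 1 = (t : ℤ) := by push_cast; ring
      rw [hc] at h
      obtain ⟨h1, h2⟩ := huhatb i (t+1) k
      obtain ⟨ih1, ih2⟩ := ih
      rw [h]
      exact ⟨le_max_of_le_left ih1, max_le ih2 h2⟩
  -- monotonicity of u
  have umono : ∀ (i : Fin n) (s : ℕ) (k : Fin d), u i ((s:ℤ) - 1) k ≤ u i (s:ℤ) k := by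
    intro i s k
    rw [hu i s k]; exact le_max_left _ _
  refine ⟨fun t i k => abs_le.2 ⟨le_trans (by nlinarith) (hub t i k).1, (hub t i k).2⟩, ?_⟩
  -- nonnegativity at shifted indices
  have unn2 : ∀ (i : Fin n) (t : ℕ) (k : Fin d), 0 ≤ u i ((t:ℤ) - 2) k := by
    intro i t k
    match t with
    | 0 => simp [hu2]
    | 1 => norm_num [hu1]
    | (s+2) =>
      have hc : (((s+2 : ℕ)) : ℤ) - 2 = (s : ℤ) := by push_cast; ring
      rw [hc]; exact (hub s i k).1
  -- key per-coordinate bound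
  have key : ∀ (i : Fin n) (k : Fin d),
      ∑ t ∈ Finset.range (T*K),
        (invSq (u i ((t:ℤ) - 2)) δ k - invSq (u i ((t:ℤ) - 1)) δ k)^2 ≤ δ⁻¹ := by
    intro i k
    set b : ℕ → ℝ := fun t => (Real.sqrt (u i ((t:ℤ) - 2) k + δ))⁻¹ with hb
    have hpos : ∀ t : ℕ, 0 < Real.sqrt (u i ((t:ℤ) - 2) k + δ) :=
      fun t => Real.sqrt_pos.2 (by linarith [unn2 i t k])
    have hmono : ∀ t, b (t+1) ≤ b t := by
      intro t
      have hle : u i ((t:ℤ) - 2) k ≤ u i (((t+1:ℕ):ℤ) - 2) k := by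
        match t with
        | 0 => norm_num [hu1, hu2]
        | (s+1) =>
          have e1 : (((s+1:ℕ)):ℤ) - 2 = (s:ℤ) - 1 := by push_cast; ring
          have e2 : ((((s+1)+1:ℕ)):ℤ) - 2 = (s:ℤ) := by push_cast; ring
          rw [e1, e2]
          exact umono i s k
      exact inv_anti₀ (hpos t) (Real.sqrt_le_sqrt (by linarith))
    have hnn : ∀ t, 0 ≤ b t := fun t => le_of_lt (inv_pos.2 (hpos t))
    have hb0 : b 0 = (Real.sqrt δ)⁻¹ := by
      simp only [hb, Nat.cast_zero, zero_sub]
      rw [show ((-2 : ℤ)) = (-2 : ℤ) from rfl, hu2]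
      simp
    have := telescope_sq (T*K) b hmono hnn
    rw [hb0] at this
    have hδ' : ((Real.sqrt δ)⁻¹)^2 = δ⁻¹ := by
      rw [← Real.sqrt_inv, Real.sq_sqrt (by positivity)]
    rw [hδ'] at this
    refine le_trans (le_of_eq ?_) this
    apply Finset.sum_congr rfl
    intro t _
    have hc : (((t+1:ℕ)):ℤ) - 2 = (t:ℤ) - 1 := by push_cast; ring
    simp only [hb, invSq, hc, PiLp.toLp_apply]
  -- assemble
  have hnorm : ∀ (t : ℕ) (i : Fin n),
      ‖invSq (u i ((t:ℤ) - 2)) δ - invSq (u i ((t:ℤ) - 1)) δ‖^2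
        = ∑ k, (invSq (u i ((t:ℤ) - 2)) δ k - invSq (u i ((t:ℤ) - 1)) δ k)^2 := by
    intro t i
    rw [EuclideanSpace.norm_eq, Real.sq_sqrt (by positivity)]
    apply Finset.sum_congr rfl
    intro k _
    rw [PiLp.sub_apply, Real.norm_eq_abs, sq_abs]
  calc ∑ t ∈ Finset.range (T * K),
        (1 / (n : ℝ)) * ∑ i, ‖invSq (u i ((t : ℤ) - 2)) δ - invSq (u i ((t : ℤ) - 1)) δ‖ ^ 2
      = (1 / (n : ℝ)) * ∑ i, ∑ k, ∑ t ∈ Finset.range (T * K),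
          (invSq (u i ((t:ℤ) - 2)) δ k - invSq (u i ((t:ℤ) - 1)) δ k)^2 := by
        simp_rw [hnorm]
        rw [← Finset.mul_sum]
        congr 1
        rw [Finset.sum_comm]
        exact Finset.sum_congr rfl fun i _ => Finset.sum_comm
    _ ≤ (1 / (n : ℝ)) * ∑ (_ : Fin n), ∑ (_ : Fin d), δ⁻¹ := by
        apply mul_le_mul_of_nonneg_left _ (by positivity)
        apply Finset.sum_le_sum; intro i _
        apply Finset.sum_le_sum; intro k _
        exact key i k
    _ = (d : ℝ) / δ := by
        simp only [Finset.sum_const, Finset.card_univ, Fintype.card_fin, nsmul_eq_mul]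
        field_simp
end
end

section
/- Let δ > 0 and, for each i ∈ {1,…,n}, let (u_i^t)_{t ≥ −2} be a sequence of vectors in ℝ^d that is componentwise nonnegative and componentwise nondecreasing in t, with u_i^{−2} = 0. Then for any positive integers T and K: ∑_{t=0}^{TK−1} (1/n)·∑_{i=1}^n ‖1/√(u_i^{t−2}+δ) − 1/√(u_i^{t−1}+δ)‖² ≤ d/δ. -/
open MeasureTheory Finset Real
open scoped RealInnerProductSpace

noncomputable section

/-- For componentwise nonnegative, componentwise nondecreasing sequences
`uᵢᵗ` (`t ≥ −2`) with `uᵢ⁻² = 0`, the telescoping sum of squared differences of `1/√(u+δ)`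
is at most `d/δ`. -/
theorem stmt19 (d n T K : ℕ) (hn : 0 < n) (hT : 0 < T) (hK : 0 < K)
    (δ : ℝ) (hδ : 0 < δ)
    (u : Fin n → ℤ → EuclideanSpace ℝ (Fin d))
    (hpos : ∀ (i : Fin n) (t : ℤ), -2 ≤ t → ∀ k, 0 ≤ u i t k)
    (hmono : ∀ (i : Fin n) (s t : ℤ), -2 ≤ s → s ≤ t → ∀ k, u i s k ≤ u i t k)
    (hinit : ∀ i : Fin n, u i (-2) = 0) :
    ∑ t ∈ Finset.range (T * K),
        (1 / (n : ℝ)) * ∑ i, ‖invSq (u i ((t : ℤ) - 2)) δ - invSq (u i ((t : ℤ) - 1)) δ‖ ^ 2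
      ≤ d / δ := by
  have key : ∀ i : Fin n, ∑ t ∈ Finset.range (T * K),
      ‖invSq (u i ((t:ℤ)-2)) δ - invSq (u i ((t:ℤ)-1)) δ‖^2 ≤ (d : ℝ) / δ := by
    intro i
    have hnorm : ∀ t : ℕ, ‖invSq (u i ((t:ℤ)-2)) δ - invSq (u i ((t:ℤ)-1)) δ‖^2
        = ∑ k, ((Real.sqrt (u i ((t:ℤ)-2) k + δ))⁻¹ - (Real.sqrt (u i ((t:ℤ)-1) k + δ))⁻¹)^2 := by
      intro t
      rw [EuclideanSpace.norm_eq, Real.sq_sqrt (by positivity)]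
      refine Finset.sum_congr rfl fun k _ => ?_
      simp [invSq, sq_abs]
    calc ∑ t ∈ Finset.range (T * K),
        ‖invSq (u i ((t:ℤ)-2)) δ - invSq (u i ((t:ℤ)-1)) δ‖^2
        = ∑ k : Fin d, ∑ t ∈ Finset.range (T * K),
          ((Real.sqrt (u i ((t:ℤ)-2) k + δ))⁻¹ - (Real.sqrt (u i ((t:ℤ)-1) k + δ))⁻¹)^2 := by
          rw [Finset.sum_comm]
          exact Finset.sum_congr rfl fun t _ => hnorm t
      _ ≤ ∑ k : Fin d, (1 / δ) := by
          refine Finset.sum_le_sum fun k _ => ?_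
          set h : ℕ → ℝ := fun t => ((Real.sqrt (u i ((t:ℤ)-2) k + δ))⁻¹)^2 with hh
          have hstep : ∀ t ∈ Finset.range (T * K),
              ((Real.sqrt (u i ((t:ℤ)-2) k + δ))⁻¹ - (Real.sqrt (u i ((t:ℤ)-1) k + δ))⁻¹)^2
              ≤ h t - h (t+1) := by
            intro t _
            have h1 : ((t:ℤ)+1) - 2 = (t:ℤ) - 1 := by ring
            have hx0 : (0:ℝ) ≤ u i ((t:ℤ)-2) k := hpos i _ (by omega) k
            have hy0 : (0:ℝ) ≤ u i ((t:ℤ)-1) k := hpos i _ (by omega) k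
            have hle : u i ((t:ℤ)-2) k ≤ u i ((t:ℤ)-1) k :=
              hmono i _ _ (by omega) (by omega) k
            set x := (Real.sqrt (u i ((t:ℤ)-2) k + δ))⁻¹ with hxdef
            set y := (Real.sqrt (u i ((t:ℤ)-1) k + δ))⁻¹ with hydef
            have hy0' : 0 ≤ y := by positivity
            have hxy : y ≤ x := by
              apply inv_anti₀ (by positivity)
              exact Real.sqrt_le_sqrt (by linarith)
            have : h (t+1) = y^2 := by
              simp only [hh]
              rw [show ((t+1:ℕ):ℤ) - 2 = (t:ℤ) - 1 by push_cast; ring]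
            rw [this]
            have hx : h t = x^2 := rfl
            rw [hx]
            nlinarith [sq_nonneg (x - y)]
          calc ∑ t ∈ Finset.range (T * K),
              ((Real.sqrt (u i ((t:ℤ)-2) k + δ))⁻¹ - (Real.sqrt (u i ((t:ℤ)-1) k + δ))⁻¹)^2
              ≤ ∑ t ∈ Finset.range (T * K), (h t - h (t+1)) := Finset.sum_le_sum hstep
            _ = h 0 - h (T * K) := Finset.sum_range_sub' h (T * K)
            _ ≤ h 0 := by
                have : 0 ≤ h (T * K) := by positivity
                linarith
            _ = 1 / δ := by
                have hz : u i (((0:ℕ):ℤ) - 2) k = 0 := by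
                  rw [show ((0:ℕ):ℤ) - 2 = (-2 : ℤ) by norm_num, hinit i]; rfl
                simp only [hh, hz, zero_add]
                rw [one_div, ← Real.sqrt_inv, Real.sq_sqrt (by positivity)]
      _ = (d : ℝ) / δ := by
          simp [Finset.sum_const]
          ring
  calc ∑ t ∈ Finset.range (T * K),
      (1 / (n : ℝ)) * ∑ i, ‖invSq (u i ((t : ℤ) - 2)) δ - invSq (u i ((t : ℤ) - 1)) δ‖ ^ 2
      = (1 / (n:ℝ)) * ∑ i : Fin n, ∑ t ∈ Finset.range (T * K),
          ‖invSq (u i ((t : ℤ) - 2)) δ - invSq (u i ((t : ℤ) - 1)) δ‖ ^ 2 := by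
        rw [← Finset.mul_sum, Finset.sum_comm]
    _ ≤ (1 / (n:ℝ)) * ∑ i : Fin n, ((d:ℝ) / δ) := by
        apply mul_le_mul_of_nonneg_left _ (by positivity)
        exact Finset.sum_le_sum fun i _ => key i
    _ = (d:ℝ) / δ := by
        rw [Finset.sum_const, Finset.card_univ, Fintype.card_fin, nsmul_eq_mul]
        field_simp
end
end
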